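/- arXiv:2601.12484 — 9 statements merged into one kernel-verified Lean document; each statement's English description precedes it below -/
import Mathlib

section
/- The modified Bessel function I_ν(z) = (z/2)^ν ∑_{i=0}^∞ (z²/4)^i / (Γ(i+1)Γ(ν+i+1)) satisfies the derivative identity x·(d/dx)[x^{v/2} e^{-cx} I_v(2√x)] = (v - c·x)·x^{v/2} e^{-cx} I_v(2√x) + x^{(v+1)/2} e^{-cx} I_{v+1}(2√x) for all x > 0, c > 0, and v > -1. -/
noncomputable def besselI (ν z : ℝ) : ℝ :=
  (z / 2) ^ ν * ∑' i : ℕ, (z ^ 2 / 4) ^ i / (Real.Gamma (i + 1) * Real.Gamma (ν + i + 1))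

/-- The weight `w_{v,c}(x) = x^{v/2} e^{-c x} I_v(2√x)`. -/
noncomputable def wBessel (v c x : ℝ) : ℝ :=
  x ^ (v / 2) * Real.exp (-c * x) * besselI v (2 * Real.sqrt x)

/-!
With `a_v(i) = 1 / (Γ(i+1) Γ(v+i+1))` and the entire series `S_v(x) = ∑ a_v(i) xⁱ` one has
`x^{v/2} I_v(2√x) = x^v S_v(x)`. Since `Γ(i+2) = (i+1) Γ(i+1)`, the coefficients satisfy
`(i+1) a_v(i+1) = a_{v+1}(i)`, so termwise differentiation gives `S_v' = S_{v+1}`. The identity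
is then the product rule for `x^v e^{-cx} S_v(x)`.
-/

open Real Filter

noncomputable def besselCoeff (v : ℝ) (i : ℕ) : ℝ :=
  (Gamma (i + 1) * Gamma (v + i + 1))⁻¹

noncomputable def besselSeries (v x : ℝ) : ℝ :=
  ∑' i : ℕ, besselCoeff v i * x ^ i

section

variable {v : ℝ}

lemma besselCoeff_pos (hv : -1 < v) (i : ℕ) : 0 < besselCoeff v i := by
  have : 0 < v + i + 1 := by linarith [(Nat.cast_nonneg i : (0 : ℝ) ≤ i)]
  unfold besselCoeff
  positivity

lemma succ_mul_besselCoeff_succ (i : ℕ) :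
    (i + 1) * besselCoeff v (i + 1) = besselCoeff (v + 1) i := by
  have hΓ : Gamma ((i + 1 : ℕ) + 1) = (i + 1) * Gamma (i + 1) := by
    push_cast
    exact Gamma_add_one (by positivity)
  have hshift : v + ((i + 1 : ℕ) : ℝ) + 1 = v + 1 + i + 1 := by push_cast; ring
  rw [besselCoeff, besselCoeff, hΓ, hshift, mul_assoc, mul_inv,
    mul_inv_cancel_left₀ (by positivity)]

lemma besselCoeff_succ (hv : -1 < v) (i : ℕ) :
    besselCoeff v (i + 1) = besselCoeff v i / ((i + 1) * (v + i + 1)) := by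
  have hvi : 0 < v + i + 1 := by linarith [(Nat.cast_nonneg i : (0 : ℝ) ≤ i)]
  rw [eq_div_iff (by positivity), mul_comm, mul_right_comm, succ_mul_besselCoeff_succ,
    besselCoeff, besselCoeff, show v + 1 + i + 1 = (v + i + 1) + 1 by ring,
    Gamma_add_one hvi.ne']
  field_simp

lemma summable_besselCoeff_mul_pow (hv : -1 < v) (R : ℝ) :
    Summable fun i : ℕ => besselCoeff v i * R ^ i := by
  refine summable_of_ratio_norm_eventually_le (r := 1 / 2) (by norm_num) ?_
  filter_upwards [eventually_ge_atTop ⌈2 * |R| - v⌉₊] with n hn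
  have hn : 2 * |R| - v ≤ n := Nat.ceil_le.mp hn
  have hden : 2 * |R| < (n + 1) * (v + n + 1) := by
    nlinarith [abs_nonneg R, (Nat.cast_nonneg n : (0 : ℝ) ≤ n)]
  have hratio : |R| / ((n + 1) * (v + n + 1)) ≤ 1 / 2 := by
    rw [div_le_iff₀ (by linarith [abs_nonneg R])]
    linarith
  calc ‖besselCoeff v (n + 1) * R ^ (n + 1)‖
      = |R| / ((n + 1) * (v + n + 1)) * ‖besselCoeff v n * R ^ n‖ := by
        have hvn : 0 < v + n + 1 := by linarith [abs_nonneg R]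
        simp only [besselCoeff_succ hv, pow_succ, norm_mul, norm_div, Real.norm_eq_abs,
          abs_of_pos hvn, abs_of_pos (n.cast_add_one_pos : (0 : ℝ) < n + 1)]
        ring
    _ ≤ 1 / 2 * ‖besselCoeff v n * R ^ n‖ := by gcongr

theorem hasDerivAt_besselSeries (hv : -1 < v) (x : ℝ) :
    HasDerivAt (besselSeries v) (besselSeries (v + 1) x) x := by
  set R := |x| + 1
  have hxR : x ∈ Metric.ball (0 : ℝ) R := by simp [R]
  have hshift (y : ℝ) : (fun i : ℕ => besselCoeff v (i + 1) * ((i + 1 : ℕ) * y ^ (i + 1 - 1))) =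
      fun i => besselCoeff (v + 1) i * y ^ i := by
    ext i
    rw [← succ_mul_besselCoeff_succ]
    push_cast
    ring
  have hbound : Summable fun i : ℕ => besselCoeff v i * (i * R ^ (i - 1)) := by
    rw [← summable_nat_add_iff 1, hshift]
    exact summable_besselCoeff_mul_pow (by linarith) R
  have hterm_bound (i : ℕ) (y : ℝ) (hy : y ∈ Metric.ball (0 : ℝ) R) :
      ‖besselCoeff v i * (i * y ^ (i - 1))‖ ≤ besselCoeff v i * (i * R ^ (i - 1)) := by
    have hyR : |y| ≤ R := by simpa using (mem_ball_zero_iff.mp hy).le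
    rw [norm_mul, norm_mul, norm_pow, Real.norm_of_nonneg (besselCoeff_pos hv i).le,
      Real.norm_natCast, Real.norm_eq_abs]
    gcongr
    exact (besselCoeff_pos hv i).le
  have htsum := hasDerivAt_tsum_of_isPreconnected hbound Metric.isOpen_ball
    (convex_ball 0 R).isPreconnected (fun i y _ => (hasDerivAt_pow i y).const_mul _)
    hterm_bound hxR (summable_besselCoeff_mul_pow hv x) hxR
  rw [tsum_eq_zero_add' (by rw [hshift]; exact summable_besselCoeff_mul_pow (by linarith) x),
    hshift] at htsum
  simp only [Nat.cast_zero, zero_mul, mul_zero, zero_add] at htsum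
  exact htsum

end

lemma besselI_two_mul_sqrt (v : ℝ) {x : ℝ} (hx : 0 ≤ x) :
    besselI v (2 * √x) = x ^ (v / 2) * besselSeries v x := by
  have hsq : (2 * √x) ^ 2 / 4 = x := by rw [mul_pow, sq_sqrt hx]; ring
  rw [besselI, hsq, mul_div_cancel_left₀ _ two_ne_zero, sqrt_eq_rpow, ← rpow_mul hx,
    one_div_mul_eq_div, besselSeries]
  simp only [div_eq_inv_mul, besselCoeff]

lemma wBessel_eq (v c : ℝ) {x : ℝ} (hx : 0 < x) :
    wBessel v c x = x ^ v * exp (-c * x) * besselSeries v x := by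
  rw [wBessel, besselI_two_mul_sqrt v hx.le, ← add_halves v, rpow_add hx, add_halves]
  ring

theorem bessel_weight_deriv_general (v c x : ℝ) (hx : 0 < x) (hv : -1 < v) :
    x * deriv (fun y => wBessel v c y) x =
      (v - c * x) * wBessel v c x +
        x ^ ((v + 1) / 2) * Real.exp (-c * x) * besselI (v + 1) (2 * Real.sqrt x) := by
  have hderiv : HasDerivAt (fun y => y ^ v * exp (-c * y) * besselSeries v y)
      ((v * x ^ (v - 1) * exp (-c * x) + x ^ v * (exp (-c * x) * -c)) * besselSeries v x +
        x ^ v * exp (-c * x) * besselSeries (v + 1) x) x :=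
    ((hasDerivAt_rpow_const (Or.inl hx.ne')).mul
      ((hasDerivAt_id x).const_mul (-c)).exp |>.congr_deriv (by simp)).mul
      (hasDerivAt_besselSeries hv x)
  have hw : (fun y => wBessel v c y) =ᶠ[nhds x] fun y => y ^ v * exp (-c * y) * besselSeries v y :=
    (eventually_gt_nhds hx).mono fun y hy => wBessel_eq v c hy
  have hsub : x * x ^ (v - 1) = x ^ v := by rw [rpow_sub_one hx.ne']; field_simp
  have hhalf : x ^ ((v + 1) / 2) * x ^ ((v + 1) / 2) = x ^ v * x := by
    rw [← rpow_add hx, add_halves, rpow_add_one hx.ne']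
  rw [hw.deriv_eq, hderiv.deriv, wBessel_eq v c hx, besselI_two_mul_sqrt _ hx.le]
  linear_combination (v * exp (-c * x) * besselSeries v x) * hsub -
    (exp (-c * x) * besselSeries (v + 1) x) * hhalf

theorem bessel_weight_deriv (v c x : ℝ) (hx : 0 < x) (hc : 0 < c) (hv : -1 < v) :
    x * deriv (fun y => wBessel v c y) x =
      (v - c * x) * wBessel v c x +
        x ^ ((v + 1) / 2) * Real.exp (-c * x) * besselI (v + 1) (2 * Real.sqrt x) :=
  bessel_weight_deriv_general v c x hx hv
end

section
/- Define P̃_n^{(α,c)}(x) = ((-1)^n / c^{2n}) ∑_{k=0}^n c^k (n-k+1)_k L_k^{(α)}(c x), where (a)_k is the Pochhammer symbol. Then L_n^{(α)}(c x) = (-1)^n ∑_{j=0}^n c^{2j-n} / (Γ(j+1) Γ(n-j+1)) · P̃_j^{(α,c)}(x). -/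
/-- Generalized Laguerre polynomial `L_n^{(α)}(x)` with real parameter `α`. -/
noncomputable def genLaguerre (n : ℕ) (α x : ℝ) : ℝ :=
  ∑ j ∈ Finset.range (n + 1),
    (-1) ^ j * ((∏ i ∈ Finset.range (n - j), (α + j + 1 + i)) / (Nat.factorial (n - j))) *
      x ^ j / (Nat.factorial j)
/-- `P̃_n^{(α,c)}(x) = ((-1)^n / c^{2n}) ∑_{k=0}^n c^k (n-k+1)_k L_k^{(α)}(c x)`. -/
noncomputable def Pt (n : ℕ) (α c x : ℝ) : ℝ :=
  ((-1) ^ n / c ^ (2 * n)) *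
    ∑ k ∈ Finset.range (n + 1),
      c ^ k * (∏ i ∈ Finset.range k, ((n : ℝ) - k + 1 + i)) * genLaguerre k α (c * x)

/-!
Only the triangular shape of `Pt` matters, not the Laguerre polynomials themselves: since
`(j - k + 1)_k = j! / (j - k)!`, the function `Pt j` is, up to the factor `(-1)^j j! / c^(2j)`,
the convolution of `k ↦ c^k L_k` with `m ↦ 1 / m!`. The sum in the theorem convolves once more
with `m ↦ (-1)^m / m!`, and the two convolutions cancel (`e^t e^(-t) = 1`), which at the level of
coefficients is the alternating binomial sum `∑ (-1)^m C(N, m) = 0^N`.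
-/

open Finset Nat

theorem factorial_sub_mul_prod_range_eq_factorial {R : Type*} [CommRing R] {k j : ℕ}
    (hkj : k ≤ j) : ((j - k)! : R) * ∏ i ∈ range k, ((j : R) - k + 1 + i) = j ! := by
  have hprod : ∏ i ∈ range k, ((j : R) - k + 1 + i) = ((j - k + 1).ascFactorial k : R) := by
    rw [ascFactorial_eq_prod_range]
    push_cast [Nat.cast_sub hkj]
    rfl
  rw [hprod]
  exact_mod_cast congrArg (Nat.cast : ℕ → R)
    ((Nat.sub_add_cancel hkj) ▸ factorial_mul_ascFactorial (j - k) k)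

theorem sum_range_neg_one_pow_mul_choose {R : Type*} [Ring R] (N : ℕ) :
    ∑ m ∈ range (N + 1), (-1 : R) ^ m * N.choose m = if N = 0 then 1 else 0 := by
  exact_mod_cast congrArg (Int.cast : ℤ → R) (Int.alternating_sum_range_choose (n := N))

section Inversion

variable {K : Type*} [Field K] [CharZero K]

theorem sum_Ico_neg_one_pow_div_factorial_mul_factorial {k n : ℕ} (hkn : k ≤ n) :
    ∑ j ∈ Ico k (n + 1), (-1 : K) ^ j / ((n - j)! * (j - k)!) =
      if k = n then (-1) ^ n else 0 := by
  have hterm : ∀ m ∈ range (n - k + 1), (-1 : K) ^ (k + m) / ((n - (k + m))! * (k + m - k)!) =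
      (-1) ^ k / (n - k)! * ((-1) ^ m * (n - k).choose m) := by
    intro m hm
    have hm : m ≤ n - k := Nat.lt_succ_iff.mp (mem_range.mp hm)
    rw [show n - (k + m) = n - k - m by omega, Nat.add_sub_cancel_left, pow_add,
      Nat.cast_choose K hm]
    have : ((n - k)! : K) ≠ 0 := Nat.cast_ne_zero.mpr (factorial_ne_zero _)
    field_simp
  rw [sum_Ico_eq_sum_range, show n + 1 - k = n - k + 1 by omega, sum_congr rfl hterm,
    ← mul_sum, sum_range_neg_one_pow_mul_choose]
  by_cases h : k = n
  · subst h; simp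
  · simp [h, show n - k ≠ 0 by omega]

theorem sum_neg_one_pow_div_factorial_mul_sum_div_factorial (b : ℕ → K) (n : ℕ) :
    ∑ j ∈ range (n + 1), (-1) ^ j / (n - j)! * ∑ k ∈ range (j + 1), b k / (j - k)! =
      (-1) ^ n * b n := by
  calc ∑ j ∈ range (n + 1), (-1) ^ j / (n - j)! * ∑ k ∈ range (j + 1), b k / (j - k)!
      = ∑ k ∈ Ico 0 (n + 1), ∑ j ∈ Ico k (n + 1), (-1) ^ j / (n - j)! * (b k / (j - k)!) := by
        simp only [mul_sum, range_eq_Ico]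
        exact (sum_Ico_Ico_comm 0 (n + 1) _).symm
    _ = ∑ k ∈ Ico 0 (n + 1), b k * if k = n then (-1) ^ n else 0 := by
        refine sum_congr rfl fun k hk => ?_
        rw [← sum_Ico_neg_one_pow_div_factorial_mul_factorial
          (Nat.lt_succ_iff.mp (mem_Ico.mp hk).2), mul_sum]
        refine sum_congr rfl fun j _ => ?_
        ring
    _ = (-1) ^ n * b n := by simp [mul_comm]

end Inversion

theorem Pt_eq_sum_div_factorial (j : ℕ) (α c x : ℝ) :
    Pt j α c x = (-1) ^ j * j ! / c ^ (2 * j) *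
      ∑ k ∈ range (j + 1), c ^ k * genLaguerre k α (c * x) / (j - k)! := by
  rw [Pt, mul_sum, mul_sum]
  refine sum_congr rfl fun k hk => ?_
  have hprod := factorial_sub_mul_prod_range_eq_factorial (R := ℝ)
    (Nat.lt_succ_iff.mp (mem_range.mp hk))
  rw [← hprod]
  field_simp

theorem laguerre_eq_sum_Pt (n : ℕ) (α c x : ℝ) (hc : c ≠ 0) :
    genLaguerre n α (c * x) =
      (-1) ^ n * ∑ j ∈ Finset.range (n + 1),
        c ^ (2 * (j : ℤ) - (n : ℤ)) / (Real.Gamma (j + 1) * Real.Gamma ((n : ℝ) - j + 1)) *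
          Pt j α c x := by
  have hterm : ∀ j ∈ range (n + 1),
      c ^ (2 * (j : ℤ) - (n : ℤ)) / (Real.Gamma (j + 1) * Real.Gamma ((n : ℝ) - j + 1)) *
        Pt j α c x = (c ^ n)⁻¹ * ((-1) ^ j / (n - j)! *
          ∑ k ∈ range (j + 1), c ^ k * genLaguerre k α (c * x) / (j - k)!) := by
    intro j hj
    have hjn : j ≤ n := Nat.lt_succ_iff.mp (mem_range.mp hj)
    rw [← Nat.cast_sub hjn, Real.Gamma_nat_eq_factorial, Real.Gamma_nat_eq_factorial,
      zpow_sub₀ hc, show 2 * (j : ℤ) = (2 * j : ℕ) by push_cast; ring, zpow_natCast,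
      zpow_natCast, Pt_eq_sum_div_factorial]
    field_simp
  rw [sum_congr rfl hterm, ← mul_sum, sum_neg_one_pow_div_factorial_mul_sum_div_factorial]
  field_simp
  rw [← pow_mul, pow_mul', neg_one_sq, one_pow, mul_one]
end

section
/- The polynomials P̃_n^{(α,c)}(x) = ((-1)^n / c^{2n}) ∑_{k=0}^n c^k (n-k+1)_k L_k^{(α)}(c x) satisfy the parameter-raising relation P̃_n^{(α,c)}(x) = (n/c) P̃_{n-1}^{(α+1,c)}(x) + P̃_n^{(α+1,c)}(x) for all n ≥ 1. -/
lemma prod_shift (a : ℝ) (m : ℕ) :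
    ∏ i ∈ Finset.range (m + 1), (a + i) = a * ∏ i ∈ Finset.range m, (a + 1 + i) := by
  rw [Finset.prod_range_succ']
  rw [show (∏ i ∈ Finset.range m, (a + ↑(i + 1))) = ∏ i ∈ Finset.range m, (a + 1 + i) by
    apply Finset.prod_congr rfl; intro i _; push_cast; ring]
  push_cast; ring

lemma lag_step (k : ℕ) (α x : ℝ) :
    genLaguerre (k+1) α x = genLaguerre (k+1) (α+1) x - genLaguerre k (α+1) x := by
  unfold genLaguerre
  rw [Finset.sum_range_succ, Finset.sum_range_succ (n := k + 1)]
  simp only [Nat.sub_self, Finset.range_zero, Finset.prod_empty]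
  have h : ∀ j ∈ Finset.range (k+1),
      (-1) ^ j * ((∏ i ∈ Finset.range (k + 1 - j), (α + j + 1 + i)) / (Nat.factorial (k + 1 - j))) *
        x ^ j / (Nat.factorial j)
      = ((-1) ^ j * ((∏ i ∈ Finset.range (k + 1 - j), (α + 1 + j + 1 + i)) / (Nat.factorial (k + 1 - j))) *
        x ^ j / (Nat.factorial j)
        - (-1) ^ j * ((∏ i ∈ Finset.range (k - j), (α + 1 + j + 1 + i)) / (Nat.factorial (k - j))) *
        x ^ j / (Nat.factorial j)) := by
    intro j hj
    rw [Finset.mem_range] at hj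
    have hjk : j ≤ k := Nat.lt_succ_iff.mp hj
    set m := k - j with hm
    have h1 : k + 1 - j = m + 1 := by omega
    rw [h1]
    have hfac : (Nat.factorial (m+1) : ℝ) = (m+1) * Nat.factorial m := by
      push_cast [Nat.factorial_succ]; ring
    have hp1 : ∏ i ∈ Finset.range (m + 1), (α + j + 1 + i)
        = (α + j + 1) * ∏ i ∈ Finset.range m, (α + j + 1 + 1 + i) := prod_shift _ m
    have hp2 : ∏ i ∈ Finset.range (m + 1), (α + 1 + j + 1 + i)
        = (∏ i ∈ Finset.range m, (α + 1 + j + 1 + i)) * (α + 1 + j + 1 + m) :=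
      Finset.prod_range_succ _ m
    have hpc : ∏ i ∈ Finset.range m, (α + j + 1 + 1 + i) = ∏ i ∈ Finset.range m, (α + 1 + j + 1 + i) := by
      apply Finset.prod_congr rfl; intro i _; ring
    rw [hp1, hp2, hpc, hfac]
    have hm0 : (Nat.factorial m : ℝ) ≠ 0 := by positivity
    have hj0 : (Nat.factorial j : ℝ) ≠ 0 := by positivity
    have hm1 : ((m : ℝ) + 1) ≠ 0 := by positivity
    field_simp
    ring
  have hs := Finset.sum_congr rfl h
  rw [Finset.sum_sub_distrib] at hs
  rw [hs]; ring

noncomputable def Ssum (n : ℕ) (β c x : ℝ) : ℝ :=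
  ∑ k ∈ Finset.range (n + 1),
    c ^ k * (∏ i ∈ Finset.range k, ((n : ℝ) - k + 1 + i)) * genLaguerre k β (c * x)

lemma lag_zero (β x : ℝ) : genLaguerre 0 β x = 1 := by
  simp [genLaguerre]

lemma Ssum_step (m : ℕ) (β c x : ℝ) :
    Ssum (m+1) β c x = Ssum (m+1) (β+1) c x - c * (m+1) * Ssum m (β+1) c x := by
  unfold Ssum
  rw [Finset.sum_range_succ' _ (m+1), Finset.sum_range_succ'
    (fun k => c ^ k * (∏ i ∈ Finset.range k, ((↑(m+1) : ℝ) - k + 1 + i)) * genLaguerre k (β+1) (c*x)) (m+1)]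
  have h : ∀ k ∈ Finset.range (m+1),
      c ^ (k+1) * (∏ i ∈ Finset.range (k+1), ((↑(m+1) : ℝ) - ↑(k+1) + 1 + i)) * genLaguerre (k+1) β (c*x)
      = c ^ (k+1) * (∏ i ∈ Finset.range (k+1), ((↑(m+1) : ℝ) - ↑(k+1) + 1 + i)) * genLaguerre (k+1) (β+1) (c*x)
        - c * (m+1) * (c ^ k * (∏ i ∈ Finset.range k, ((m : ℝ) - k + 1 + i)) * genLaguerre k (β+1) (c*x)) := by
    intro k _
    rw [lag_step]
    have hp : ∏ i ∈ Finset.range (k+1), ((↑(m+1) : ℝ) - ↑(k+1) + 1 + i)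
        = (∏ i ∈ Finset.range k, ((m : ℝ) - k + 1 + i)) * ((m : ℝ) + 1) := by
      rw [show (∏ i ∈ Finset.range (k+1), ((↑(m+1) : ℝ) - ↑(k+1) + 1 + i))
          = ∏ i ∈ Finset.range (k+1), ((m : ℝ) - k + 1 + i) by
        apply Finset.prod_congr rfl; intro i _; push_cast; ring]
      rw [Finset.prod_range_succ]
      ring
    rw [hp, pow_succ]
    ring
  rw [Finset.sum_congr rfl h, Finset.sum_sub_distrib, ← Finset.mul_sum]
  rw [lag_zero, lag_zero]
  ring

theorem Pt_parameter_raising (n : ℕ) (hn : 1 ≤ n) (α c x : ℝ) (hc : c ≠ 0) :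
    Pt n α c x = ((n : ℝ) / c) * Pt (n - 1) (α + 1) c x + Pt n (α + 1) c x := by
  obtain ⟨m, rfl⟩ : ∃ m, n = m + 1 := ⟨n - 1, by omega⟩
  have hPt : ∀ (N : ℕ) (β : ℝ), Pt N β c x = ((-1) ^ N / c ^ (2 * N)) * Ssum N β c x :=
    fun N β => rfl
  rw [hPt, hPt, hPt]
  simp only [Nat.add_sub_cancel]
  rw [Ssum_step]
  have h2 : (2 : ℕ) * (m + 1) = 2 * m + 2 := by ring
  rw [h2]
  push_cast
  field_simp
  ring
end

section
/- The polynomials P̃_n^{(α,c)}(x) = ((-1)^n / c^{2n}) ∑_{k=0}^n c^k (n-k+1)_k L_k^{(α)}(c x) satisfy P̃_n^{(α+1,c)}(x) = ∑_{j=0}^n (n!/j!) (-1)^{j+n} c^{j-n} P̃_j^{(α,c)}(x). -/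
/-!
The coefficients of `L_k^{(α)}` are multichoose numbers, so Pascal's rule gives
`L_k^{(α+1)} = ∑_{i ≤ k} L_i^{(α)}`; together with `(n-k+1)_k = n!/(n-k)!` this writes both sides as
`(-1)^n n! ∑_{i+m+r=n} c^{-(n+m)}/m! · L_i^{(α)}(cx)`. The left side groups the triples by
`(i + r, m)` and the right side by `(i + m, r)`.
-/

open Finset Nat

lemma ascPochhammer_eval_eq_prod_range {R : Type*} [CommSemiring R] (n : ℕ) (r : R) :
    (ascPochhammer R n).eval r = ∏ i ∈ range n, (r + i) := by
  induction n with
  | zero => simp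
  | succ n ih => rw [ascPochhammer_succ_eval, prod_range_succ, ih]

lemma prod_range_add_div_factorial (β : ℝ) (N : ℕ) :
    (∏ i ∈ range N, (β + i)) / (N ! : ℝ) = Ring.multichoose β N := by
  rw [div_eq_iff (by positivity), mul_comm, ← nsmul_eq_mul,
    Ring.factorial_nsmul_multichoose_eq_ascPochhammer, Polynomial.ascPochhammer_smeval_eq_eval,
    ascPochhammer_eval_eq_prod_range]

lemma genLaguerre_eq_sum_multichoose (n : ℕ) (α x : ℝ) :
    genLaguerre n α x =
      ∑ j ∈ range (n + 1), (-1) ^ j * Ring.multichoose (α + j + 1) (n - j) * x ^ j / (j ! : ℝ) := by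
  simp only [genLaguerre, prod_range_add_div_factorial]

lemma genLaguerre_succ_add_one (k : ℕ) (α x : ℝ) :
    genLaguerre (k + 1) (α + 1) x = genLaguerre k (α + 1) x + genLaguerre (k + 1) α x := by
  simp only [genLaguerre_eq_sum_multichoose]
  rw [sum_range_succ _ (k + 1), sum_range_succ _ (k + 1), ← add_assoc, ← sum_add_distrib]
  congr 1
  · refine sum_congr rfl fun j hj => ?_
    obtain ⟨d, rfl⟩ := Nat.exists_eq_add_of_le (mem_range_succ_iff.mp hj)
    rw [show j + d + 1 - j = d + 1 by omega, Nat.add_sub_cancel_left,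
      show α + 1 + j + 1 = (α + j + 1) + 1 by ring, Ring.multichoose_succ_succ]
    ring
  · simp

lemma genLaguerre_add_one (k : ℕ) (α x : ℝ) :
    genLaguerre k (α + 1) x = ∑ i ∈ range (k + 1), genLaguerre i α x := by
  induction k with
  | zero => simp [genLaguerre]
  | succ k ih => rw [sum_range_succ, ← ih, genLaguerre_succ_add_one]

lemma prod_range_cast_sub_add_one_add {n k : ℕ} (h : k ≤ n) :
    ∏ i ∈ range k, ((n : ℝ) - k + 1 + i) = n ! / (n - k)! := by
  obtain ⟨m, rfl⟩ := Nat.exists_eq_add_of_le' h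
  rw [Nat.add_sub_cancel, eq_div_iff (by positivity), ← Nat.factorial_mul_ascFactorial,
    Nat.ascFactorial_eq_prod_range, mul_comm]
  push_cast
  exact congrArg _ (prod_congr rfl fun i _ => by ring)

lemma sum_antidiagonal_sum_antidiagonal_comm {M : Type*} [AddCommMonoid M] (n : ℕ)
    (f : ℕ → ℕ → ℕ → M) :
    ∑ p ∈ antidiagonal n, ∑ q ∈ antidiagonal p.1, f q.1 q.2 p.2 =
      ∑ p ∈ antidiagonal n, ∑ q ∈ antidiagonal p.1, f q.1 p.2 q.2 := by
  simp only [sum_sigma']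
  apply sum_nbij' (fun ⟨⟨_, m⟩, ⟨i, r⟩⟩ ↦ ⟨(i + m, r), (i, m)⟩)
    (fun ⟨⟨_, r⟩, ⟨i, m⟩⟩ ↦ ⟨(i + r, m), (i, r)⟩) <;>
    aesop (add simp [add_assoc, add_comm, add_left_comm])

lemma Pt_eq_sum_antidiagonal (n : ℕ) (α c x : ℝ) (hc : c ≠ 0) :
    Pt n α c x = (-1) ^ n * n ! *
      ∑ p ∈ antidiagonal n, c⁻¹ ^ (n + p.2) / (p.2 ! : ℝ) * genLaguerre p.1 α (c * x) := by
  rw [Pt, sum_antidiagonal_eq_sum_range_succ (fun k m => c⁻¹ ^ (n + m) / (m ! : ℝ) *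
    genLaguerre k α (c * x)), mul_sum, mul_sum]
  refine sum_congr rfl fun k hk => ?_
  have hkn : k ≤ n := mem_range_succ_iff.mp hk
  rw [prod_range_cast_sub_add_one_add hkn]
  obtain ⟨m, rfl⟩ := Nat.exists_eq_add_of_le' hkn
  rw [Nat.add_sub_cancel, inv_pow]
  field_simp
  ring

lemma Pt_add_one_eq_sum_antidiagonal (n : ℕ) (α c x : ℝ) (hc : c ≠ 0) :
    Pt n (α + 1) c x = (-1) ^ n * n ! * ∑ p ∈ antidiagonal n, ∑ q ∈ antidiagonal p.1,
      c⁻¹ ^ (n + p.2) / (p.2 ! : ℝ) * genLaguerre q.1 α (c * x) := by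
  rw [Pt_eq_sum_antidiagonal _ _ _ _ hc]
  congr 1
  refine sum_congr rfl fun p _ => ?_
  rw [genLaguerre_add_one, mul_sum, sum_antidiagonal_eq_sum_range_succ_mk]

lemma factorial_div_mul_zpow_mul_Pt (α c x : ℝ) (hc : c ≠ 0) {j n : ℕ} (hjn : j ≤ n) :
    (n ! / j ! : ℝ) * (-1) ^ (j + n) * c ^ ((j : ℤ) - n) * Pt j α c x =
      (-1) ^ n * n ! * ∑ q ∈ antidiagonal j,
        c⁻¹ ^ (n + q.2) / (q.2 ! : ℝ) * genLaguerre q.1 α (c * x) := by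
  obtain ⟨r, rfl⟩ := Nat.exists_eq_add_of_le' hjn
  have hsign : (-1 : ℝ) ^ (j + (r + j)) = (-1) ^ r := by
    rw [show j + (r + j) = r + 2 * j by ring, pow_add, pow_mul, neg_one_sq, one_pow, mul_one]
  rw [Pt_eq_sum_antidiagonal _ _ _ _ hc, hsign,
    show ((j : ℤ) - ↑(r + j)) = -(r : ℤ) by push_cast; ring, zpow_neg, zpow_natCast, ← inv_pow,
    mul_sum, mul_sum, mul_sum]
  refine sum_congr rfl fun q _ => ?_
  field_simp
  ring

theorem Pt_alpha_shift_sum (n : ℕ) (α c x : ℝ) (hc : c ≠ 0) :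
    Pt n (α + 1) c x =
      ∑ j ∈ Finset.range (n + 1),
        ((Nat.factorial n : ℝ) / (Nat.factorial j)) * (-1) ^ (j + n) *
          c ^ ((j : ℤ) - (n : ℤ)) * Pt j α c x := by
  rw [Pt_add_one_eq_sum_antidiagonal _ _ _ _ hc,
    sum_antidiagonal_sum_antidiagonal_comm n
      fun i r m => c⁻¹ ^ (n + m) / (m ! : ℝ) * genLaguerre i α (c * x),
    sum_antidiagonal_eq_sum_range_succ (fun j (_ : ℕ) => ∑ q ∈ antidiagonal j,
      c⁻¹ ^ (n + q.2) / (q.2 ! : ℝ) * genLaguerre q.1 α (c * x)), mul_sum]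
  exact sum_congr rfl fun j hj =>
    (factorial_div_mul_zpow_mul_Pt α c x hc (mem_range_succ_iff.mp hj)).symm
end

section
/- The polynomials P̃_n^{(α,c)} satisfy the structure relation x·(d/dx) P̃_n^{(α,c)}(x) = (n(n-1)/c³)·P̃_{n-2}^{(α,c)}(x) + (n(c(α+n)+1)/c²)·P̃_{n-1}^{(α,c)}(x) + n·P̃_n^{(α,c)}(x) for n ≥ 2. -/
/-!
Write `P̃_n = (-1)^n c^{-2n} ∑_k c^k n(n-1)⋯(n-k+1) L_k(cx)`. The Euler operator `x d/dx` acts on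
`L_k(cx)` through the Laguerre relation `t L_k'(t) = k L_k(t) - (k+α) L_{k-1}(t)`, so both sides of
the structure relation become combinations of the `L_k(cx)`. Their coefficients agree by the
falling-factorial identities `(n+1)^{(k+1)} = (n+1) n^{(k)}` and
`(n+1-k) (n+1)^{(k)} = (n+1) n^{(k)}`.
-/

open Finset

theorem prod_range_sub_add_eq_descFactorial (n k : ℕ) :
    ∏ i ∈ range k, ((n : ℝ) - k + 1 + i) = n.descFactorial k := by
  rw [← descPochhammer_eval_eq_descFactorial, descPochhammer_eval_eq_prod_range,
    ← prod_range_reflect]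
  refine prod_congr rfl fun i hi => ?_
  rw [Nat.cast_sub (by simp at hi; omega), Nat.cast_sub (by simp at hi; omega)]
  push_cast
  ring

theorem cast_succ_sub_mul_descFactorial (n k : ℕ) :
    ((n : ℝ) + 1 - k) * (n + 1).descFactorial k = (n + 1) * n.descFactorial k := by
  rcases le_or_gt k (n + 1) with hk | hk
  · have h := congrArg (Nat.cast (R := ℝ)) (Nat.succ_descFactorial n k)
    push_cast [Nat.cast_sub hk] at h
    exact h
  · simp [Nat.descFactorial_of_lt hk, Nat.descFactorial_of_lt (by omega : n < k)]

noncomputable def descFactorialSum (n : ℕ) (c : ℝ) (L : ℕ → ℝ) : ℝ :=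
  ∑ k ∈ range (n + 1), c ^ k * n.descFactorial k * L k

theorem descFactorialSum_eq_sum_range {n N : ℕ} (h : n ≤ N) (c : ℝ) (L : ℕ → ℝ) :
    descFactorialSum n c L = ∑ k ∈ range (N + 1), c ^ k * n.descFactorial k * L k := by
  refine sum_subset (range_subset_range.mpr (by omega)) fun k _ hk => ?_
  simp [Nat.descFactorial_of_lt (by simpa using hk : n < k)]

theorem Pt_eq_descFactorialSum (n : ℕ) (α c x : ℝ) :
    Pt n α c x =
      (-1) ^ n / c ^ (2 * n) * descFactorialSum n c (fun k => genLaguerre k α (c * x)) := by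
  simp only [Pt, descFactorialSum, prod_range_sub_add_eq_descFactorial]

theorem descFactorialSum_structure_relation (m : ℕ) (α c : ℝ) (L D : ℕ → ℝ) (hD₀ : D 0 = 0)
    (hD : ∀ k : ℕ, D (k + 1) = (k + 1) * L (k + 1) - (k + 1 + α) * L k) :
    descFactorialSum (m + 2) c D =
      (m + 2) * (m + 1) * c * descFactorialSum m c L
        - (m + 2) * (c * (α + (m + 2)) + 1) * descFactorialSum (m + 1) c L
        + (m + 2) * descFactorialSum (m + 2) c L := by
  have hshift : descFactorialSum (m + 2) c D =
      ∑ k ∈ range (m + 2 + 1), c ^ k * (m + 2).descFactorial k * k * L k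
        - ∑ k ∈ range (m + 2 + 1),
            c ^ (k + 1) * (m + 2).descFactorial (k + 1) * (k + 1 + α) * L k := by
    rw [descFactorialSum, sum_range_succ' _ (m + 2), sum_range_succ' _ (m + 2),
      sum_range_succ _ (m + 2)]
    simp only [hD₀, hD, Nat.descFactorial_of_lt (Nat.lt_succ_self (m + 2)), Nat.cast_zero,
      mul_zero, zero_mul, add_zero, ← sum_sub_distrib]
    refine sum_congr rfl fun k _ => ?_
    push_cast
    ring
  have hF₂ : ∀ k, ((m + 2).descFactorial (k + 1) : ℝ) = (m + 2) * (m + 1).descFactorial k :=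
    fun k => by rw [Nat.succ_descFactorial_succ]; push_cast; ring
  have hF₁ : ∀ k, ((m : ℝ) + 2 - k) * (m + 2).descFactorial k = (m + 2) * (m + 1).descFactorial k :=
    fun k => by
      have h := cast_succ_sub_mul_descFactorial (m + 1) k
      push_cast at h
      linear_combination h
  have hF₀ := cast_succ_sub_mul_descFactorial m
  rw [hshift, descFactorialSum_eq_sum_range (by omega : m ≤ m + 2),
    descFactorialSum_eq_sum_range (by omega : m + 1 ≤ m + 2), descFactorialSum, mul_sum, mul_sum,
    mul_sum, ← sum_sub_distrib, ← sum_sub_distrib, ← sum_add_distrib]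
  refine sum_congr rfl fun k _ => ?_
  linear_combination (c ^ k * L k) * (-c * (k + 1 + α) * hF₂ k + (m + 2) * c * hF₀ k - hF₁ k)

theorem mul_deriv_sum_monomial (s : Finset ℕ) (a : ℕ → ℝ) (t : ℝ) :
    t * deriv (fun t => ∑ j ∈ s, a j * t ^ j) t = ∑ j ∈ s, j * a j * t ^ j := by
  have h : HasDerivAt (fun t => ∑ j ∈ s, a j * t ^ j) (∑ j ∈ s, a j * (j * t ^ (j - 1))) t :=
    HasDerivAt.fun_sum fun j _ => by simpa using (hasDerivAt_pow j t).const_mul (a j)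
  rw [h.deriv, mul_sum]
  refine sum_congr rfl fun j _ => ?_
  rcases Nat.eq_zero_or_pos j with rfl | hj
  · simp
  · rw [← mul_pow_sub_one hj.ne' t]
    ring

noncomputable def genLaguerreCoeff (n : ℕ) (α : ℝ) (j : ℕ) : ℝ :=
  (-1) ^ j * (∏ i ∈ range (n - j), (α + j + 1 + i)) / ((n - j).factorial * j.factorial)

theorem genLaguerre_eq_sum (n : ℕ) (α : ℝ) :
    genLaguerre n α = fun t => ∑ j ∈ range (n + 1), genLaguerreCoeff n α j * t ^ j := by
  funext t
  refine sum_congr rfl fun j _ => ?_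
  rw [genLaguerreCoeff]
  field_simp

theorem differentiable_genLaguerre (n : ℕ) (α : ℝ) : Differentiable ℝ (genLaguerre n α) := by
  rw [genLaguerre_eq_sum]
  fun_prop

theorem sub_mul_genLaguerreCoeff_succ {n j : ℕ} (hj : j ≤ n) (α : ℝ) :
    ((n : ℝ) + 1 - j) * genLaguerreCoeff (n + 1) α j = (n + 1 + α) * genLaguerreCoeff n α j := by
  obtain ⟨d, rfl⟩ := Nat.exists_eq_add_of_le hj
  rw [genLaguerreCoeff, genLaguerreCoeff, show j + d + 1 - j = d + 1 by omega,
    Nat.add_sub_cancel_left, prod_range_succ, Nat.factorial_succ]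
  push_cast
  field_simp
  ring

theorem mul_deriv_genLaguerre_zero (α t : ℝ) : t * deriv (genLaguerre 0 α) t = 0 := by
  simp [genLaguerre_eq_sum]

theorem mul_deriv_genLaguerre_succ (n : ℕ) (α t : ℝ) :
    t * deriv (genLaguerre (n + 1) α) t =
      (n + 1) * genLaguerre (n + 1) α t - (n + 1 + α) * genLaguerre n α t := by
  simp only [genLaguerre_eq_sum]
  rw [mul_deriv_sum_monomial, sum_range_succ _ (n + 1), sum_range_succ _ (n + 1), mul_add,
    mul_sum, mul_sum, add_sub_right_comm, ← sum_sub_distrib]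
  have hcoeff : ∀ j ∈ range (n + 1),
      j * genLaguerreCoeff (n + 1) α j * t ^ j =
        (n + 1) * (genLaguerreCoeff (n + 1) α j * t ^ j)
          - (n + 1 + α) * (genLaguerreCoeff n α j * t ^ j) := fun j hj => by
    have hjn : j ≤ n := Nat.lt_succ_iff.mp (mem_range.mp hj)
    linear_combination (-t ^ j) * sub_mul_genLaguerreCoeff_succ hjn α
  rw [sum_congr rfl hcoeff]
  push_cast
  ring

theorem mul_deriv_Pt (n : ℕ) (α c x : ℝ) :
    x * deriv (fun y => Pt n α c y) x = (-1) ^ n / c ^ (2 * n) *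
      descFactorialSum n c (fun k => c * x * deriv (genLaguerre k α) (c * x)) := by
  have hL (k : ℕ) : HasDerivAt (fun y => genLaguerre k α (c * y))
      (deriv (genLaguerre k α) (c * x) * c) x := by
    simpa [Function.comp_def] using (differentiable_genLaguerre k α (c * x)).hasDerivAt.comp x
      ((hasDerivAt_id x).const_mul c)
  have hPt : HasDerivAt (fun y => Pt n α c y) ((-1) ^ n / c ^ (2 * n) * ∑ k ∈ range (n + 1),
      c ^ k * n.descFactorial k * (deriv (genLaguerre k α) (c * x) * c)) x := by
    simp only [Pt_eq_descFactorialSum, descFactorialSum]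
    exact (HasDerivAt.fun_sum fun k _ => (hL k).const_mul _).const_mul _
  rw [hPt.deriv, descFactorialSum, mul_left_comm, mul_sum]
  exact congrArg _ (sum_congr rfl fun k _ => by ring)

theorem Pt_structure_relation (n : ℕ) (hn : 2 ≤ n) (α c x : ℝ) (hc : c ≠ 0) :
    x * deriv (fun y => Pt n α c y) x =
      ((n : ℝ) * ((n : ℝ) - 1) / c ^ 3) * Pt (n - 2) α c x +
        ((n : ℝ) * (c * (α + n) + 1) / c ^ 2) * Pt (n - 1) α c x +
        (n : ℝ) * Pt n α c x := by
  obtain ⟨m, rfl⟩ := Nat.exists_eq_add_of_le' hn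
  rw [mul_deriv_Pt, descFactorialSum_structure_relation m α c (fun k => genLaguerre k α (c * x)) _
    (mul_deriv_genLaguerre_zero α _) (fun k => mul_deriv_genLaguerre_succ k α _)]
  simp only [Pt_eq_descFactorialSum, Nat.add_sub_cancel, show m + 2 - 1 = m + 1 by omega]
  push_cast
  field_simp
  ring
end

section
/- The polynomials P̃_n^{(α,c)} satisfy the mixed-parameter three-term relation x·P̃_n^{(α+1,c)}(x) = (n/c³)·P̃_{n-1}^{(α,c)}(x) + ((c(n+α+1)+1)/c²)·P̃_n^{(α,c)}(x) + P̃_{n+1}^{(α,c)}(x) for n ≥ 1. -/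
/-!
Put `y = c x` in the Laguerre recurrence
`y L_k^{(α+1)}(y) = (k + α + 1) L_k^{(α)}(y) - (k + 1) L_{k+1}^{(α)}(y)`: this writes
`c² x P̃_n^{(α+1,c)}(x)` as a combination of the `L_k^{(α)}(c x)`, and comparing coefficients with
the right-hand side leaves two identities for the falling factorial `a↓k = (a - k + 1)_k`, namely
`a (a - 1)↓k = a↓(k+1)` and `(a + 1)↓(k+1) = a↓(k+1) + (k + 1) a↓k`. All sums can be taken over a
common range because `n↓k = 0` for `k > n`.
-/

open Finset Polynomial

section descPochhammer

variable {R : Type*} [CommRing R]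

lemma descPochhammer_eval_eq_prod_range_add (n : ℕ) (r : R) :
    (descPochhammer R n).eval r = ∏ i ∈ range n, (r - n + 1 + i) := by
  rw [descPochhammer_eval_eq_prod_range, ← prod_range_reflect]
  refine prod_congr rfl fun i hi => ?_
  rw [mem_range] at hi
  rw [Nat.sub_sub, Nat.cast_sub (by omega)]
  push_cast
  ring

lemma descPochhammer_succ_eval_add_one (n : ℕ) (r : R) :
    (descPochhammer R (n + 1)).eval (r + 1) = (r + 1) * (descPochhammer R n).eval r := by
  simp [descPochhammer_succ_left, eval_comp]

lemma descPochhammer_succ_eval_add_one_eq_add (n : ℕ) (r : R) :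
    (descPochhammer R (n + 1)).eval (r + 1) =
      (descPochhammer R (n + 1)).eval r + (n + 1) * (descPochhammer R n).eval r := by
  rw [descPochhammer_succ_eval_add_one, descPochhammer_succ_eval]
  ring

end descPochhammer

lemma Finset.sum_range_succ_shift {M : Type*} [AddCommMonoid M] (f : ℕ → M) (N : ℕ)
    (h₀ : f 0 = 0) (hN : f (N + 1) = 0) :
    ∑ k ∈ range (N + 1), f (k + 1) = ∑ k ∈ range (N + 1), f k := by
  rw [sum_range_succ, sum_range_succ', h₀, hN]

/-- The coefficient of `x ^ j` in `L_n^{(α)}(x)`, for `j ≤ n`. -/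
noncomputable def laguerreCoeff (n : ℕ) (α : ℝ) (j : ℕ) : ℝ :=
  (-1) ^ j * (descPochhammer ℝ (n - j)).eval (n + α) / ((n - j).factorial * j.factorial)

lemma genLaguerre_eq_sum_laguerreCoeff (n : ℕ) (α x : ℝ) :
    genLaguerre n α x = ∑ j ∈ range (n + 1), laguerreCoeff n α j * x ^ j := by
  refine sum_congr rfl fun j hj => ?_
  have hjn : j ≤ n := Nat.lt_succ_iff.mp (mem_range.mp hj)
  have hprod : ∏ i ∈ range (n - j), (α + j + 1 + i) = (descPochhammer ℝ (n - j)).eval (n + α) := by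
    rw [descPochhammer_eval_eq_prod_range_add]
    refine prod_congr rfl fun i _ => ?_
    rw [Nat.cast_sub hjn]
    ring
  rw [laguerreCoeff, hprod]
  ring

lemma laguerreCoeff_add_one_param {k j : ℕ} (hj : j < k) (α : ℝ) :
    laguerreCoeff k (α + 1) j =
      (k + α + 1) * laguerreCoeff k α (j + 1) - (k + 1) * laguerreCoeff (k + 1) α (j + 1) := by
  obtain ⟨m, rfl⟩ : ∃ m, k = j + m + 1 := ⟨k - j - 1, by omega⟩
  have h₁ : j + m + 1 - j = m + 1 := by omega
  have h₂ : j + m + 1 - (j + 1) = m := by omega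
  have h₃ : j + m + 1 + 1 - (j + 1) = m + 1 := by omega
  have hr : ∀ s : ℝ, s = ((j + m + 1 : ℕ) : ℝ) + α + 1 →
      (descPochhammer ℝ (m + 1)).eval s =
        s * (descPochhammer ℝ m).eval (((j + m + 1 : ℕ) : ℝ) + α) := by
    rintro s rfl
    exact descPochhammer_succ_eval_add_one m _
  simp only [laguerreCoeff, h₁, h₂, h₃]
  rw [hr _ (by ring), hr _ (by push_cast; ring), Nat.factorial_succ, Nat.factorial_succ j]
  push_cast
  field_simp
  ring

lemma laguerreCoeff_add_one_param_self (k : ℕ) (α : ℝ) :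
    laguerreCoeff k (α + 1) k = -(k + 1) * laguerreCoeff (k + 1) α (k + 1) := by
  simp only [laguerreCoeff, Nat.sub_self, descPochhammer_zero, eval_one, Nat.factorial_succ]
  push_cast
  field_simp
  ring

lemma laguerreCoeff_succ_zero (k : ℕ) (α : ℝ) :
    (k + 1) * laguerreCoeff (k + 1) α 0 = (k + α + 1) * laguerreCoeff k α 0 := by
  simp only [laguerreCoeff, Nat.sub_zero, Nat.factorial_succ]
  rw [show ((k + 1 : ℕ) : ℝ) + α = (k + α) + 1 by push_cast; ring, descPochhammer_succ_eval_add_one]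
  push_cast
  field_simp

lemma mul_genLaguerre_add_one_param (k : ℕ) (α y : ℝ) :
    y * genLaguerre k (α + 1) y =
      (k + α + 1) * genLaguerre k α y - (k + 1) * genLaguerre (k + 1) α y := by
  simp only [genLaguerre_eq_sum_laguerreCoeff]
  rw [mul_sum, sum_range_succ _ k, sum_range_succ' _ k, sum_range_succ' _ (k + 1),
    sum_range_succ _ k]
  have hcoeff : ∀ j ∈ range k, y * (laguerreCoeff k (α + 1) j * y ^ j) =
      (k + α + 1) * (laguerreCoeff k α (j + 1) * y ^ (j + 1)) -
        (k + 1) * (laguerreCoeff (k + 1) α (j + 1) * y ^ (j + 1)) := fun j hj => by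
    rw [laguerreCoeff_add_one_param (mem_range.mp hj)]
    ring
  rw [sum_congr rfl hcoeff, sum_sub_distrib, ← mul_sum, ← mul_sum]
  linear_combination y ^ (k + 1) * laguerreCoeff_add_one_param_self k α +
    laguerreCoeff_succ_zero k α

noncomputable def laguerreSum (a α c x : ℝ) (N : ℕ) : ℝ :=
  ∑ k ∈ range N, c ^ k * (descPochhammer ℝ k).eval a * genLaguerre k α (c * x)

lemma Pt_eq_laguerreSum (n : ℕ) (α c x : ℝ) :
    Pt n α c x = (-1) ^ n / c ^ (2 * n) * laguerreSum n α c x (n + 1) := by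
  simp only [Pt, laguerreSum, descPochhammer_eval_eq_prod_range_add]

lemma laguerreSum_natCast_of_le {n N : ℕ} (h : n + 1 ≤ N) (α c x : ℝ) :
    laguerreSum n α c x N = laguerreSum n α c x (n + 1) := by
  refine (sum_subset (range_subset_range.mpr h) fun k _ hk => ?_).symm
  rw [descPochhammer_eval_coe_nat_of_lt (by simpa using hk), mul_zero, zero_mul]

lemma descPochhammer_eval_mixed_relation (a α c : ℝ) (k : ℕ) :
    c ^ (k + 1) * (descPochhammer ℝ k).eval a * (k + α + 1) -
        c ^ k * k * (descPochhammer ℝ (k - 1)).eval a =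
      -a * c * (c ^ k * (descPochhammer ℝ k).eval (a - 1)) +
        (c * (a + α + 1) + 1) * (c ^ k * (descPochhammer ℝ k).eval a) -
          c ^ k * (descPochhammer ℝ k).eval (a + 1) := by
  -- at `k = 0` the junk value `k - 1 = 0` is multiplied by `k`
  cases k with
  | zero =>
    simp only [descPochhammer_zero, eval_one, CharP.cast_eq_zero, pow_zero, zero_add]
    ring
  | succ j =>
    have hleft := descPochhammer_succ_eval_add_one (j + 1) (a - 1)
    rw [sub_add_cancel, descPochhammer_succ_eval] at hleft
    push_cast at hleft
    rw [Nat.add_sub_cancel, descPochhammer_succ_eval_add_one_eq_add]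
    push_cast
    linear_combination -c ^ (j + 2) * hleft

lemma laguerreSum_mixed_relation (a α c x : ℝ) (N : ℕ) (hN : (descPochhammer ℝ N).eval a = 0) :
    c ^ 2 * x * laguerreSum a (α + 1) c x (N + 1) =
      -a * c * laguerreSum (a - 1) α c x (N + 1) + (c * (a + α + 1) + 1) * laguerreSum a α c x (N + 1)
        - laguerreSum (a + 1) α c x (N + 1) := by
  set L : ℕ → ℝ := fun k => genLaguerre k α (c * x)
  set f : ℕ → ℝ := fun k => c ^ k * k * (descPochhammer ℝ (k - 1)).eval a * L k
  have hterm : ∀ k ∈ range (N + 1),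
      c ^ 2 * x * (c ^ k * (descPochhammer ℝ k).eval a * genLaguerre k (α + 1) (c * x)) =
        c ^ (k + 1) * (descPochhammer ℝ k).eval a * (k + α + 1) * L k - f (k + 1) := fun k _ => by
    have := mul_genLaguerre_add_one_param k α (c * x)
    simp only [f, L, Nat.add_sub_cancel]
    push_cast
    linear_combination c ^ (k + 1) * (descPochhammer ℝ k).eval a * this
  have hshift := sum_range_succ_shift f N (by simp [f]) (by simp [f, hN])
  simp only [laguerreSum, mul_sum, ← sum_sub_distrib, ← sum_add_distrib]
  rw [sum_congr rfl hterm, sum_sub_distrib, hshift, ← sum_sub_distrib]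
  refine sum_congr rfl fun k _ => ?_
  linear_combination L k * descPochhammer_eval_mixed_relation a α c k

theorem Pt_mixed_parameter_relation (n : ℕ) (hn : 1 ≤ n) (α c x : ℝ) (hc : c ≠ 0) :
    x * Pt n (α + 1) c x =
      ((n : ℝ) / c ^ 3) * Pt (n - 1) α c x +
        ((c * ((n : ℝ) + α + 1) + 1) / c ^ 2) * Pt n α c x + Pt (n + 1) α c x := by
  obtain ⟨m, rfl⟩ := Nat.exists_eq_add_of_le' hn
  have hrel := laguerreSum_mixed_relation (m + 1 : ℕ) α c x (m + 1 + 1)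
    (descPochhammer_eval_coe_nat_of_lt (by omega))
  rw [show ((m + 1 : ℕ) : ℝ) - 1 = m by push_cast; ring,
    show ((m + 1 : ℕ) : ℝ) + 1 = (m + 1 + 1 : ℕ) by push_cast; ring,
    laguerreSum_natCast_of_le (n := m + 1) (N := m + 1 + 1 + 1) (by omega) (α + 1),
    laguerreSum_natCast_of_le (n := m + 1) (N := m + 1 + 1 + 1) (by omega) α,
    laguerreSum_natCast_of_le (n := m) (N := m + 1 + 1 + 1) (by omega) α] at hrel
  simp only [Pt_eq_laguerreSum, Nat.add_sub_cancel]
  field_simp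
  linear_combination (-1) ^ (m + 1) * c ^ (4 * m + 5) * hrel
end

section
/- The two explicit expressions for P̃_n^{(α,c)} agree: ((-1)^n / c^{2n}) ∑_{k=0}^n c^k (n-k+1)_k L_k^{(α)}(c x) = ∑_{k=0}^n (Γ(n+1)/Γ(k+1)) c^{k-n} L_{n-k}^{(-n-α-1)}(1/c) x^k, for all real x and c ≠ 0. -/
lemma aux_reflect : ∀ (d : ℕ) (β : ℝ),
    ∏ i ∈ Finset.range d, (β + (d : ℝ) - 1 - (i : ℝ)) = ∏ i ∈ Finset.range d, (β + (i : ℝ)) := by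
  intro d
  induction d with
  | zero => simp
  | succ d ih =>
    intro β
    rw [Finset.prod_range_succ, Finset.prod_range_succ']
    have h1 : ∀ i ∈ Finset.range d, β + ((d + 1 : ℕ) : ℝ) - 1 - (i : ℝ)
        = (β + 1) + (d : ℝ) - 1 - (i : ℝ) := by
      intro i _; push_cast; ring
    rw [Finset.prod_congr rfl h1, ih (β + 1)]
    have h2 : ∀ i ∈ Finset.range d, (β + 1) + (i : ℝ) = β + ((i + 1 : ℕ) : ℝ) := by
      intro i _; push_cast; ring
    rw [Finset.prod_congr rfl h2]
    push_cast; ring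

lemma aux_fact : ∀ (k n : ℕ), k ≤ n →
    (∏ i ∈ Finset.range k, ((n : ℝ) - (i : ℝ))) * (Nat.factorial (n - k) : ℝ)
      = (Nat.factorial n : ℝ) := by
  intro k
  induction k with
  | zero => simp
  | succ k ih =>
    intro n hk
    rw [Finset.prod_range_succ]
    have h1 : n - k = (n - (k + 1)) + 1 := by omega
    have h2 : ((n : ℝ) - (k : ℝ)) = ((n - k : ℕ) : ℝ) := by
      rw [Nat.cast_sub (by omega)]
    calc (∏ i ∈ Finset.range k, ((n : ℝ) - i)) * ((n : ℝ) - k) * (Nat.factorial (n - (k+1)) : ℝ)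
        = (∏ i ∈ Finset.range k, ((n : ℝ) - i)) *
            (((n - k : ℕ) : ℝ) * (Nat.factorial (n - (k+1)) : ℝ)) := by
          rw [h2]; ring
      _ = (∏ i ∈ Finset.range k, ((n : ℝ) - i)) * (Nat.factorial (n - k) : ℝ) := by
          rw [h1, Nat.factorial_succ]; push_cast; ring
      _ = (Nat.factorial n : ℝ) := ih n (by omega)

lemma prod_asc (n k : ℕ) (hk : k ≤ n) :
    (∏ i ∈ Finset.range k, ((n : ℝ) - (k : ℝ) + 1 + (i : ℝ)))
      = (Nat.factorial n : ℝ) / (Nat.factorial (n - k) : ℝ) := by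
  have h1 : ∀ i ∈ Finset.range k, (n : ℝ) - (k : ℝ) + 1 + (i : ℝ)
      = ((n : ℝ) - (k : ℝ) + 1) + (i : ℝ) := by intro i _; ring
  rw [Finset.prod_congr rfl h1, ← aux_reflect k ((n : ℝ) - k + 1)]
  have h2 : ∀ i ∈ Finset.range k, ((n : ℝ) - k + 1) + (k : ℝ) - 1 - (i : ℝ)
      = (n : ℝ) - (i : ℝ) := by intro i _; ring
  rw [Finset.prod_congr rfl h2, eq_div_iff (by exact_mod_cast (Nat.factorial_ne_zero _))]
  exact aux_fact k n hk

lemma prod_neg (n k j : ℕ) (α : ℝ) (hj : j ≤ k) (hk : k ≤ n) :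
    (∏ i ∈ Finset.range (k - j), (-(n : ℝ) - α - 1 + ((n - k : ℕ) : ℝ) + 1 + (i : ℝ)))
      = (-1 : ℝ) ^ (k - j) * ∏ i ∈ Finset.range (k - j), (α + (j : ℝ) + 1 + (i : ℝ)) := by
  have hnk : ((n - k : ℕ) : ℝ) = (n : ℝ) - k := Nat.cast_sub hk
  have h1 : ∀ i ∈ Finset.range (k - j), (-(n : ℝ) - α - 1 + ((n - k : ℕ) : ℝ) + 1 + (i : ℝ))
      = (-1 : ℝ) * ((α + (j : ℝ) + 1) + ((k - j : ℕ) : ℝ) - 1 - (i : ℝ)) := by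
    intro i _
    rw [hnk, Nat.cast_sub hj]; ring
  rw [Finset.prod_congr rfl h1, Finset.prod_mul_distrib, Finset.prod_const,
    aux_reflect (k - j) (α + (j : ℝ) + 1)]
  simp [Finset.card_range]

lemma key_sign (j n : ℕ) (hjn : j ≤ n) : (-1:ℝ)^(n-j) = (-1)^n * (-1)^j := by
  have h1 : (-1:ℝ)^j * (-1)^j = 1 := by
    rw [← pow_add, ← two_mul, pow_mul, neg_one_sq, one_pow]
  have h2 : ((-1:ℝ)^j)⁻¹ = (-1)^j := inv_eq_of_mul_eq_one_right h1
  rw [pow_sub₀ _ (by norm_num) hjn, h2]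

lemma key_sign2 (n k j : ℕ) (hj : j ≤ k) (hk : k ≤ n) :
    (-1:ℝ)^(n-k) * (-1)^(k-j) = (-1)^n * (-1)^j := by
  rw [key_sign k n hk, key_sign j k hj]
  have h1 : (-1:ℝ)^k * (-1)^k = 1 := by
    rw [← pow_add, ← two_mul, pow_mul, neg_one_sq, one_pow]
  linear_combination ((-1:ℝ)^n * (-1)^j) * h1

theorem Pt_two_expressions_agree (n : ℕ) (α c x : ℝ) (hc : c ≠ 0) :
    ((-1) ^ n / c ^ (2 * n)) *
        ∑ k ∈ Finset.range (n + 1),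
          c ^ k * (∏ i ∈ Finset.range k, ((n : ℝ) - k + 1 + i)) * genLaguerre k α (c * x) =
      ∑ k ∈ Finset.range (n + 1),
        (Real.Gamma ((n : ℝ) + 1) / Real.Gamma ((k : ℝ) + 1)) * c ^ ((k : ℤ) - (n : ℤ)) *
          genLaguerre (n - k) (-(n : ℝ) - α - 1) (1 / c) * x ^ k := by
  simp only [genLaguerre, Finset.mul_sum, Finset.sum_mul]
  rw [Finset.sum_sigma', Finset.sum_sigma']
  apply Finset.sum_nbij' (fun p => (⟨p.2, n - p.1⟩ : Σ _ : ℕ, ℕ))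
    (fun p => (⟨n - p.2, p.1⟩ : Σ _ : ℕ, ℕ))
  · rintro ⟨k, j⟩ h
    simp only [Finset.mem_sigma, Finset.mem_range] at h ⊢
    omega
  · rintro ⟨k, m⟩ h
    simp only [Finset.mem_sigma, Finset.mem_range] at h ⊢
    omega
  · rintro ⟨k, j⟩ h
    simp only [Finset.mem_sigma, Finset.mem_range] at h
    simp only [Sigma.mk.inj_iff, heq_eq_eq]
    exact ⟨by omega, trivial⟩
  · rintro ⟨k, m⟩ h
    simp only [Finset.mem_sigma, Finset.mem_range] at h
    simp only [Sigma.mk.inj_iff, heq_eq_eq]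
    exact ⟨trivial, by omega⟩
  · rintro ⟨k, j⟩ h
    simp only [Finset.mem_sigma, Finset.mem_range] at h
    obtain ⟨hk, hj⟩ := h
    have hk' : k ≤ n := by omega
    have hj' : j ≤ k := by omega
    dsimp only
    have e1 : n - j - (n - k) = k - j := by omega
    rw [e1, prod_asc n k hk', prod_neg n k j α hj' hk', Real.Gamma_nat_eq_factorial,
      Real.Gamma_nat_eq_factorial, zpow_sub₀ hc, zpow_natCast, zpow_natCast, div_pow, one_pow,
      pow_sub₀ c hc hk']
    have f1 : ((Nat.factorial (k - j) : ℝ)) ≠ 0 := by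
      exact_mod_cast Nat.factorial_ne_zero _
    have f2 : ((Nat.factorial j : ℝ)) ≠ 0 := by exact_mod_cast Nat.factorial_ne_zero _
    have f3 : ((Nat.factorial (n - k) : ℝ)) ≠ 0 := by exact_mod_cast Nat.factorial_ne_zero _
    have f4 : ((Nat.factorial n : ℝ)) ≠ 0 := by exact_mod_cast Nat.factorial_ne_zero _
    trans ((-1:ℝ)^(n-k) * (-1)^(k-j) *
      ((Nat.factorial n : ℝ) * (∏ i ∈ Finset.range (k - j), (α + (j:ℝ) + 1 + (i:ℝ))) *
        x ^ j * c ^ (j + k)) /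
      (c ^ (2*n) * (Nat.factorial (n - k) : ℝ) * (Nat.factorial (k - j) : ℝ) *
        (Nat.factorial j : ℝ)))
    · rw [key_sign2 n k j hj' hk']
      field_simp
      ring
    · field_simp
      ring
end

section
/- For α > -1, c > 0, and integers 0 ≤ i < n, the function Q̃_n^{(α,c)}(x) := (d^n/dx^n)[x^{(α+n)/2} e^{-cx} I_{α+n}(2√x)] satisfies ∫_0^∞ x^i Q̃_n^{(α,c)}(x) dx = 0, while ∫_0^∞ x^n Q̃_n^{(α,c)}(x) dx = (-1)^n Γ(n+1) e^{1/c} c^{-α-n-1}. -/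
/-- `Q̃_n^{(α,c)}(x) = (d^n/dx^n) w_{α+n,c}(x)`. -/
noncomputable def Qt (n : ℕ) (α c x : ℝ) : ℝ :=
  iteratedDeriv n (fun y => wBessel (α + n) c y) x

open Real Set Filter Topology MeasureTheory
open scoped Nat

theorem integral_Ioi_of_hasDerivAt_of_tendsto_nhdsGT {f f' : ℝ → ℝ} {a l m : ℝ}
    (hl : Tendsto f (𝓝[>] a) (𝓝 l)) (hderiv : ∀ x ∈ Ioi a, HasDerivAt f (f' x) x)
    (hint : IntegrableOn f' (Ioi a)) (hm : Tendsto f atTop (𝓝 m)) :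
    ∫ x in Ioi a, f' x = m - l := by
  classical
  have hcont : ContinuousWithinAt (Function.update f a l) (Ici a) a := by
    rwa [← continuousWithinAt_Ioi_iff_Ici, continuousWithinAt_update_same,
      sdiff_singleton_eq_self (by simp : a ∉ Ioi a)]
  have hderiv' : ∀ x ∈ Ioi a, HasDerivAt (Function.update f a l) (f' x) x := fun x hx =>
    (hderiv x hx).congr_of_eventuallyEq <|
      (eventually_ne_nhds (ne_of_gt hx)).mono fun y hy => Function.update_of_ne hy _ _
  have hm' : Tendsto (Function.update f a l) atTop (𝓝 m) :=
    hm.congr' <| (eventually_ne_atTop a).mono fun y hy => (Function.update_of_ne hy _ _).symm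
  simpa using integral_Ioi_of_hasDerivAt_of_tendsto hcont hderiv' hint hm'

theorem integral_Ioi_pow_succ_mul_of_hasDerivAt {f f' : ℝ → ℝ} {i : ℕ}
    (h0 : Tendsto f (𝓝[>] 0) (𝓝 0)) (hderiv : ∀ x ∈ Ioi 0, HasDerivAt f (f' x) x)
    (hint : IntegrableOn (fun x => x ^ i * f x) (Ioi 0))
    (hint' : IntegrableOn (fun x => x ^ (i + 1) * f' x) (Ioi 0))
    (htop : Tendsto (fun x => x ^ (i + 1) * f x) atTop (𝓝 0)) :
    ∫ x in Ioi 0, x ^ (i + 1) * f' x = -(i + 1) * ∫ x in Ioi 0, x ^ i * f x := by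
  have hpow : Tendsto (fun x : ℝ => x ^ (i + 1)) (𝓝[>] 0) (𝓝 0) := by
    simpa using ((continuous_pow (i + 1)).tendsto (0 : ℝ)).mono_left nhdsWithin_le_nhds
  have hint'' : IntegrableOn (fun x => (i + 1 : ℝ) * (x ^ i * f x)) (Ioi 0) := hint.const_mul _
  have hderiv' : ∀ x ∈ Ioi (0 : ℝ), HasDerivAt (fun x => x ^ (i + 1) * f x)
      ((i + 1) * (x ^ i * f x) + x ^ (i + 1) * f' x) x := fun x hx =>
    ((hasDerivAt_pow (i + 1) x).fun_mul (hderiv x hx)).congr_deriv (by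
      rw [Nat.add_sub_cancel]
      push_cast
      ring)
  have hibp := integral_Ioi_of_hasDerivAt_of_tendsto_nhdsGT (by simpa using hpow.mul h0) hderiv'
    (hint''.add hint') htop
  rw [integral_add hint'' hint', integral_const_mul, sub_zero] at hibp
  linarith

theorem integral_Ioi_pow_mul_of_hasDerivAt {F : ℕ → ℝ → ℝ} {n : ℕ}
    (hderiv : ∀ m < n, ∀ x ∈ Ioi (0 : ℝ), HasDerivAt (F m) (F (m + 1) x) x)
    (hzero : ∀ m < n, Tendsto (F m) (𝓝[>] 0) (𝓝 0))
    (hint : ∀ m ≤ n, ∀ j : ℕ, IntegrableOn (fun x => x ^ j * F m x) (Ioi 0))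
    (htop : ∀ m ≤ n, ∀ j : ℕ, Tendsto (fun x => x ^ j * F m x) atTop (𝓝 0)) :
    (∀ i < n, ∫ x in Ioi 0, x ^ i * F n x = 0) ∧
      ∫ x in Ioi 0, x ^ n * F n x = (-1) ^ n * n ! * ∫ x in Ioi 0, F 0 x := by
  have hmoment : ∀ i m, m + i ≤ n →
      ∫ x in Ioi 0, x ^ i * F (m + i) x = (-1) ^ i * i ! * ∫ x in Ioi 0, F m x := by
    intro i m hmi
    induction i with
    | zero => simp
    | succ i ih =>
      rw [← add_assoc, integral_Ioi_pow_succ_mul_of_hasDerivAt (hzero (m + i) (by omega))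
        (hderiv (m + i) (by omega)) (hint (m + i) (by omega) i) (hint (m + i + 1) hmi _)
        (htop (m + i) (by omega) _),
        ih (by omega), Nat.factorial_succ]
      push_cast
      ring
  refine ⟨fun i hi => ?_, by simpa using hmoment n 0 (by simp)⟩
  obtain ⟨m, rfl⟩ : ∃ m, n = m + 1 + i := ⟨n - i - 1, by omega⟩
  rw [hmoment i (m + 1) le_rfl, integral_Ioi_of_hasDerivAt_of_tendsto_nhdsGT (hzero m (by omega))
    (hderiv m (by omega)) (by simpa using hint (m + 1) (by omega) 0)
    (by simpa using htop m (by omega) 0)]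
  ring

theorem hasSum_pow_div_factorial (x : ℝ) : HasSum (fun k => x ^ k / k !) (exp x) :=
  Real.exp_eq_exp_ℝ ▸ NormedSpace.expSeries_div_hasSum_exp x

theorem integrableOn_rpow_mul_exp_neg_mul {c s : ℝ} (hs : -1 < s) (hc : 0 < c) :
    IntegrableOn (fun x => x ^ s * exp (-c * x)) (Ioi 0) := by
  simpa using integrableOn_rpow_mul_exp_neg_mul_rpow hs zero_lt_one hc

theorem integral_rpow_mul_exp_neg_mul {c s : ℝ} (hs : -1 < s) (hc : 0 < c) :
    ∫ x in Ioi 0, x ^ s * exp (-c * x) = (1 / c) ^ (s + 1) * Gamma (s + 1) := by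
  simpa using integral_rpow_mul_exp_neg_mul_Ioi (a := s + 1) (by linarith) hc

namespace BesselMoments

def FactorialSummable (b : ℕ → ℝ) : Prop :=
  ∀ R : ℝ, 0 < R → Summable fun k => |b k| * k ! * R ^ k

noncomputable def expSeries (c q : ℝ) (b : ℕ → ℝ) (x : ℝ) : ℝ :=
  ∑' k : ℕ, b k * (x ^ (q + k) * exp (-c * x))

namespace FactorialSummable

variable {b : ℕ → ℝ}

theorem summable_abs_mul_pow (hb : FactorialSummable b) {R : ℝ} (hR : 0 < R) :
    Summable fun k => |b k| * R ^ k :=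
  (hb R hR).of_nonneg_of_le (fun k => by positivity) fun k => by
    gcongr
    exact le_mul_of_one_le_right (abs_nonneg _) (mod_cast k.factorial_pos)

theorem const_mul (hb : FactorialSummable b) (e : ℝ) : FactorialSummable fun k => e * b k :=
  fun R hR => ((hb R hR).mul_left |e|).congr fun k => by rw [abs_mul]; ring

theorem add_natCast_mul (hb : FactorialSummable b) (t : ℝ) :
    FactorialSummable fun k => (t + k) * b k := by
  intro R hR
  refine ((hb (2 * R) (by positivity)).mul_left (|t| + 1)).of_nonneg_of_le
    (fun k => by positivity) fun k => ?_
  have hk : |t + k| ≤ (|t| + 1) * 2 ^ k := by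
    have h2k : (k : ℝ) + 1 ≤ 2 ^ k := mod_cast Nat.lt_two_pow_self
    calc |t + k| ≤ |t| + k := by simpa using abs_add_le t k
      _ ≤ (|t| + 1) * 2 ^ k := by
          nlinarith [abs_nonneg t, mul_nonneg (abs_nonneg t) k.cast_nonneg]
  calc |(t + k) * b k| * k ! * R ^ k = |t + k| * (|b k| * k ! * R ^ k) := by rw [abs_mul]; ring
    _ ≤ (|t| + 1) * 2 ^ k * (|b k| * k ! * R ^ k) := by gcongr
    _ = (|t| + 1) * (|b k| * k ! * (2 * R) ^ k) := by ring

end FactorialSummable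

section ExpSeries

variable {c q : ℝ} {b : ℕ → ℝ}

theorem FactorialSummable.summable_expSeries (hb : FactorialSummable b) (c q : ℝ) {x : ℝ}
    (hx : 0 < x) : Summable fun k : ℕ => b k * (x ^ (q + k) * exp (-c * x)) :=
  .of_norm_bounded ((hb.summable_abs_mul_pow hx).mul_right (x ^ q * exp (-c * x))) fun k => by
    rw [norm_mul, norm_of_nonneg (by positivity : 0 ≤ x ^ (q + k) * exp (-c * x)), rpow_add hx,
      rpow_natCast, Real.norm_eq_abs]
    exact le_of_eq (by ring)

theorem pow_mul_expSeries {x : ℝ} (hx : 0 < x) (j : ℕ) :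
    x ^ j * expSeries c q b x = expSeries c (q + j) b x := by
  rw [expSeries, expSeries, ← tsum_mul_left]
  congr 1 with k
  rw [add_right_comm, rpow_add hx (q + k) j, rpow_natCast]
  ring

theorem abs_mul_rpow_add_mul_exp_le (hc : 0 ≤ c) {l R y : ℝ} (hl : 0 < l) (hy : y ∈ Icc l R)
    (β p : ℝ) (k : ℕ) :
    |β * (y ^ (p + k) * exp (-c * y))| ≤ |β| * R ^ k * max (l ^ p) (R ^ p) := by
  have hy0 : 0 < y := hl.trans_le hy.1
  have hyp : y ^ p ≤ max (l ^ p) (R ^ p) := by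
    rcases le_total 0 p with hp | hp
    · exact le_max_of_le_right (rpow_le_rpow hy0.le hy.2 hp)
    · exact le_max_of_le_left (rpow_le_rpow_of_nonpos hl hy.1 hp)
  have hexp : exp (-c * y) ≤ 1 := exp_le_one_iff.2 (by nlinarith)
  rw [abs_mul, abs_of_nonneg (by positivity : 0 ≤ y ^ (p + k) * exp (-c * y)), rpow_add hy0,
    rpow_natCast, mul_assoc |β| (R ^ k)]
  gcongr |β| * ?_
  calc y ^ p * y ^ k * exp (-c * y) ≤ max (l ^ p) (R ^ p) * R ^ k * 1 := by
        have hR : 0 ≤ R := hy0.le.trans hy.2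
        have hM : 0 ≤ max (l ^ p) (R ^ p) := (rpow_nonneg hl.le p).trans (le_max_left _ _)
        gcongr
        exact hy.2
    _ = R ^ k * max (l ^ p) (R ^ p) := by ring

theorem hasDerivAt_rpow_mul_exp (c s : ℝ) {y : ℝ} (hy : 0 < y) :
    HasDerivAt (fun y => y ^ s * exp (-c * y))
      (s * y ^ (s - 1) * exp (-c * y) - c * (y ^ s * exp (-c * y))) y := by
  have hexp : HasDerivAt (fun y => exp (-c * y)) (exp (-c * y) * -c) y := by
    simpa using ((hasDerivAt_id y).const_mul (-c)).exp
  exact ((hasDerivAt_rpow_const (Or.inl hy.ne')).mul hexp).congr_deriv (by ring)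

theorem FactorialSummable.hasDerivAt_expSeries (hb : FactorialSummable b) (hc : 0 < c) (q : ℝ)
    {x : ℝ} (hx : 0 < x) :
    HasDerivAt (expSeries c q b)
      (expSeries c (q - 1) (fun k => (q + k) * b k) x + expSeries c q (fun k => -c * b k) x) x := by
  set D : ℕ → ℝ := fun k => (q + k) * b k
  set E : ℕ → ℝ := fun k => -c * b k
  have hD : FactorialSummable D := hb.add_natCast_mul q
  have hE : FactorialSummable E := hb.const_mul (-c)
  have hl : 0 < x / 2 := by positivity
  have hR : 0 < 2 * x := by positivity
  have hxt : x ∈ Ioo (x / 2) (2 * x) := ⟨by linarith, by linarith⟩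
  have hderiv : ∀ (k : ℕ), ∀ y ∈ Ioo (x / 2) (2 * x),
      HasDerivAt (fun y => b k * (y ^ (q + k) * exp (-c * y)))
        (D k * (y ^ (q - 1 + k) * exp (-c * y)) + E k * (y ^ (q + k) * exp (-c * y))) y :=
    fun k y hy => ((hasDerivAt_rpow_mul_exp c (q + k) (hl.trans hy.1)).const_mul (b k)).congr_deriv
      (by rw [show q + k - 1 = q - 1 + k by ring]; ring)
  have hbound : ∀ (k : ℕ), ∀ y ∈ Ioo (x / 2) (2 * x),
      ‖D k * (y ^ (q - 1 + k) * exp (-c * y)) + E k * (y ^ (q + k) * exp (-c * y))‖ ≤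
        |D k| * (2 * x) ^ k * max ((x / 2) ^ (q - 1)) ((2 * x) ^ (q - 1)) +
          |E k| * (2 * x) ^ k * max ((x / 2) ^ q) ((2 * x) ^ q) :=
    fun k y hy => (norm_add_le _ _).trans (add_le_add
      (abs_mul_rpow_add_mul_exp_le hc.le hl (Ioo_subset_Icc_self hy) _ _ k)
      (abs_mul_rpow_add_mul_exp_le hc.le hl (Ioo_subset_Icc_self hy) _ _ k))
  have hu : Summable fun k => |D k| * (2 * x) ^ k * max ((x / 2) ^ (q - 1)) ((2 * x) ^ (q - 1)) +
      |E k| * (2 * x) ^ k * max ((x / 2) ^ q) ((2 * x) ^ q) :=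
    ((hD.summable_abs_mul_pow hR).mul_right _).add ((hE.summable_abs_mul_pow hR).mul_right _)
  have := hasDerivAt_tsum_of_isPreconnected hu isOpen_Ioo isPreconnected_Ioo hderiv hbound hxt
    (hb.summable_expSeries c q hx) hxt
  rwa [Summable.tsum_add (hD.summable_expSeries c (q - 1) hx) (hE.summable_expSeries c q hx)]
    at this

theorem FactorialSummable.abs_expSeries_le (hb : FactorialSummable b) (hc : 0 < c) (q : ℝ) :
    ∃ M, ∀ x, 0 < x → |expSeries c q b x| ≤ M * (x ^ q * exp (-(c / 2) * x)) := by
  have hR : 0 < 2 / c := by positivity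
  set M := ∑' k, |b k| * k ! * (2 / c) ^ k
  refine ⟨M, fun x hx => ?_⟩
  -- With `R = 2 / c`, `|b k| ≤ M / (k! R^k)` bounds the series by
  -- `M x^q e^(-cx) ∑ (x/R)^k / k! = M x^q e^(-cx/2)`.
  have hterm : ∀ k : ℕ, ‖b k * (x ^ (q + k) * exp (-c * x))‖ ≤
      M * (x ^ q * exp (-c * x)) * ((x / (2 / c)) ^ k / k !) := fun k => by
    have hk : |b k| * k ! * (2 / c) ^ k ≤ M := (hb _ hR).le_tsum k fun j _ => by positivity
    have hpow : (2 / c) ^ k * (x / (2 / c)) ^ k = x ^ k := by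
      rw [← mul_pow, mul_div_cancel₀ _ hR.ne']
    rw [norm_mul, norm_of_nonneg (by positivity : 0 ≤ x ^ (q + k) * exp (-c * x)), rpow_add hx,
      rpow_natCast, Real.norm_eq_abs]
    calc |b k| * (x ^ q * x ^ k * exp (-c * x))
        = |b k| * k ! * (2 / c) ^ k * (x ^ q * exp (-c * x)) * ((x / (2 / c)) ^ k / k !) := by
          rw [← hpow]
          field_simp
      _ ≤ M * (x ^ q * exp (-c * x)) * ((x / (2 / c)) ^ k / k !) := by gcongr
  have hexp := (hasSum_pow_div_factorial (x / (2 / c))).mul_left (M * (x ^ q * exp (-c * x)))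
  calc |expSeries c q b x| ≤ M * (x ^ q * exp (-c * x)) * exp (x / (2 / c)) :=
        tsum_of_norm_bounded hexp hterm
    _ = M * (x ^ q * exp (-(c / 2) * x)) := by
        rw [mul_assoc, mul_assoc, ← exp_add]
        congr 3
        field_simp
        ring

theorem FactorialSummable.tendsto_expSeries_atTop (hb : FactorialSummable b) (hc : 0 < c)
    (q : ℝ) : Tendsto (expSeries c q b) atTop (𝓝 0) := by
  obtain ⟨M, hM⟩ := hb.abs_expSeries_le hc q
  refine squeeze_zero_norm' ?_
    (by simpa only [mul_zero] using
      (tendsto_rpow_mul_exp_neg_mul_atTop_nhds_zero q (c / 2) (by positivity)).const_mul M)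
  filter_upwards [eventually_gt_atTop 0] with x hx using hM x hx

theorem FactorialSummable.tendsto_expSeries_nhdsGT_zero (hb : FactorialSummable b) (hc : 0 < c)
    (hq : 0 < q) : Tendsto (expSeries c q b) (𝓝[>] 0) (𝓝 0) := by
  obtain ⟨M, hM⟩ := hb.abs_expSeries_le hc q
  have hcont : ContinuousAt (fun x => M * (x ^ q * exp (-(c / 2) * x))) 0 :=
    continuousAt_const.mul ((continuousAt_rpow_const 0 q (Or.inr hq.le)).mul (by fun_prop))
  refine squeeze_zero_norm' ?_ (by
    simpa only [zero_rpow hq.ne', zero_mul, mul_zero] using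
      hcont.tendsto.mono_left nhdsWithin_le_nhds)
  filter_upwards [self_mem_nhdsWithin] with x hx using hM x hx

theorem FactorialSummable.continuousOn_expSeries (hb : FactorialSummable b) (hc : 0 < c)
    (q : ℝ) : ContinuousOn (expSeries c q b) (Ioi 0) := fun _ hx =>
  (hb.hasDerivAt_expSeries hc q hx).continuousAt.continuousWithinAt

theorem FactorialSummable.integrableOn_expSeries (hb : FactorialSummable b) (hc : 0 < c)
    (hq : -1 < q) : IntegrableOn (expSeries c q b) (Ioi 0) := by
  obtain ⟨M, hM⟩ := hb.abs_expSeries_le hc q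
  refine ((integrableOn_rpow_mul_exp_neg_mul hq (half_pos hc)).const_mul M).mono'
    ((hb.continuousOn_expSeries hc q).aestronglyMeasurable measurableSet_Ioi) ?_
  filter_upwards [ae_restrict_mem measurableSet_Ioi] with x hx using hM x hx

theorem integral_expSeries (hc : 0 < c) (hq : -1 < q)
    (hsum : Summable fun k : ℕ => |b k| * ((1 / c) ^ (q + k + 1) * Gamma (q + k + 1))) :
    ∫ x in Ioi 0, expSeries c q b x =
      ∑' k : ℕ, b k * ((1 / c) ^ (q + k + 1) * Gamma (q + k + 1)) := by
  have hqk (k : ℕ) : -1 < q + k := by linarith [k.cast_nonneg (α := ℝ)]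
  have hint (k : ℕ) : IntegrableOn (fun x => b k * (x ^ (q + k) * exp (-c * x))) (Ioi 0) :=
    (integrableOn_rpow_mul_exp_neg_mul (hqk k) hc).const_mul (b k)
  have hnorm (k : ℕ) : ∫ x in Ioi 0, ‖b k * (x ^ (q + k) * exp (-c * x))‖ =
      |b k| * ((1 / c) ^ (q + k + 1) * Gamma (q + k + 1)) := by
    rw [← integral_rpow_mul_exp_neg_mul (hqk k) hc, ← integral_const_mul]
    refine setIntegral_congr_fun measurableSet_Ioi fun x (hx : 0 < x) => ?_
    rw [norm_mul, Real.norm_eq_abs, norm_of_nonneg (by positivity)]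
  unfold expSeries
  rw [← integral_tsum_of_summable_integral_norm hint (by simpa only [hnorm] using hsum)]
  congr 1 with k
  rw [integral_const_mul, integral_rpow_mul_exp_neg_mul (hqk k) hc]

end ExpSeries

inductive ExpSeriesSpan (c p : ℝ) : (ℝ → ℝ) → Prop
  | expSeries {q : ℝ} {b : ℕ → ℝ} :
      FactorialSummable b → p ≤ q → ExpSeriesSpan c p (expSeries c q b)
  | add {f g : ℝ → ℝ} : ExpSeriesSpan c p f → ExpSeriesSpan c p g → ExpSeriesSpan c p (f + g)
  | congr {f g : ℝ → ℝ} : ExpSeriesSpan c p f → EqOn f g (Ioi 0) → ExpSeriesSpan c p g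

namespace ExpSeriesSpan

variable {c p : ℝ} {f : ℝ → ℝ}

theorem exists_hasDerivAt (hc : 0 < c) (hf : ExpSeriesSpan c p f) :
    ∃ f', ExpSeriesSpan c (p - 1) f' ∧ ∀ x ∈ Ioi (0 : ℝ), HasDerivAt f (f' x) x := by
  induction hf with
  | expSeries hb hq =>
    exact ⟨_, .add (.expSeries (hb.add_natCast_mul _) (by linarith))
      (.expSeries (hb.const_mul (-c)) (by linarith)), fun x hx => hb.hasDerivAt_expSeries hc _ hx⟩
  | add _ _ ihf ihg =>
    obtain ⟨f', hf', hderf⟩ := ihf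
    obtain ⟨g', hg', hderg⟩ := ihg
    exact ⟨f' + g', hf'.add hg', fun x hx => (hderf x hx).add (hderg x hx)⟩
  | congr _ hfg ih =>
    obtain ⟨f', hf', hder⟩ := ih
    exact ⟨f', hf', fun x hx => (hder x hx).congr_of_eventuallyEq
      (hfg.eventuallyEq_of_mem (Ioi_mem_nhds hx)).symm⟩

theorem differentiableAt (hc : 0 < c) (hf : ExpSeriesSpan c p f) {x : ℝ} (hx : 0 < x) :
    DifferentiableAt ℝ f x :=
  let ⟨_, _, hder⟩ := hf.exists_hasDerivAt hc
  (hder x hx).differentiableAt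

theorem iteratedDeriv (hc : 0 < c) (hf : ExpSeriesSpan c p f) (m : ℕ) :
    ExpSeriesSpan c (p - m) (iteratedDeriv m f) := by
  induction m with
  | zero => simpa using hf
  | succ m ih =>
    obtain ⟨f', hf', hder⟩ := ih.exists_hasDerivAt hc
    rw [iteratedDeriv_succ, Nat.cast_succ, ← sub_sub]
    exact hf'.congr fun x hx => (hder x hx).deriv.symm

theorem pow_mul (hf : ExpSeriesSpan c p f) (j : ℕ) :
    ExpSeriesSpan c (p + j) fun x => x ^ j * f x := by
  induction hf with
  | expSeries hb hq =>
    exact .congr (.expSeries hb (by linarith)) fun x hx => (pow_mul_expSeries hx j).symm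
  | add _ _ ihf ihg => exact (ihf.add ihg).congr fun x _ => (mul_add _ _ _).symm
  | congr _ hfg ih => exact ih.congr fun x hx => congrArg (x ^ j * ·) (hfg hx)

theorem tendsto_atTop (hc : 0 < c) (hf : ExpSeriesSpan c p f) : Tendsto f atTop (𝓝 0) := by
  induction hf with
  | expSeries hb _ => exact hb.tendsto_expSeries_atTop hc _
  | add _ _ ihf ihg =>
    have hsum := ihf.add ihg
    rw [add_zero] at hsum
    exact hsum
  | congr _ hfg ih => exact ih.congr' (hfg.eventuallyEq_of_mem (Ioi_mem_atTop 0))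

theorem tendsto_nhdsGT_zero (hc : 0 < c) (hp : 0 < p) (hf : ExpSeriesSpan c p f) :
    Tendsto f (𝓝[>] 0) (𝓝 0) := by
  induction hf with
  | expSeries hb hq => exact hb.tendsto_expSeries_nhdsGT_zero hc (hp.trans_le hq)
  | add _ _ ihf ihg =>
    have hsum := ihf.add ihg
    rw [add_zero] at hsum
    exact hsum
  | congr _ hfg ih => exact ih.congr' (hfg.eventuallyEq_of_mem self_mem_nhdsWithin)

theorem integrableOn (hc : 0 < c) (hp : -1 < p) (hf : ExpSeriesSpan c p f) :
    IntegrableOn f (Ioi 0) := by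
  induction hf with
  | expSeries hb hq => exact hb.integrableOn_expSeries hc (hp.trans_le hq)
  | add _ _ ihf ihg => exact ihf.add ihg
  | congr _ hfg ih => exact ih.congr_fun hfg measurableSet_Ioi

end ExpSeriesSpan

/-- `I_v(2√x) = x^(v/2) ∑ₖ besselCoeff v k * x^k`. -/
noncomputable def besselCoeff (v : ℝ) (k : ℕ) : ℝ :=
  (Gamma (k + 1) * Gamma (v + k + 1))⁻¹

variable {v c : ℝ}

theorem Gamma_add_natCast_add_one_pos (hv : -1 < v) (k : ℕ) : 0 < Gamma (v + k + 1) :=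
  Gamma_pos_of_pos (by linarith [k.cast_nonneg (α := ℝ)])

theorem besselCoeff_pos (hv : -1 < v) (k : ℕ) : 0 < besselCoeff v k := by
  have := Gamma_add_natCast_add_one_pos hv k
  rw [besselCoeff, Gamma_nat_eq_factorial]
  positivity

theorem factorialSummable_besselCoeff (hv : -1 < v) : FactorialSummable (besselCoeff v) := by
  intro R hR
  have hG := Gamma_add_natCast_add_one_pos hv
  have hterm (k : ℕ) : |besselCoeff v k| * k ! * R ^ k = R ^ k / Gamma (v + k + 1) := by
    rw [abs_of_pos (besselCoeff_pos hv k), besselCoeff, Gamma_nat_eq_factorial]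
    field_simp
  simp_rw [hterm]
  have hratio (k : ℕ) : ‖R ^ (k + 1) / Gamma (v + ↑(k + 1) + 1)‖ / ‖R ^ k / Gamma (v + k + 1)‖ =
      R / (v + k + 1) := by
    have hk : 0 < v + k + 1 := by linarith [k.cast_nonneg (α := ℝ)]
    have := hG k
    have := hG (k + 1)
    rw [norm_of_nonneg (by positivity), norm_of_nonneg (by positivity), Nat.cast_succ, ← add_assoc,
      add_right_comm, Gamma_add_one hk.ne']
    field_simp
    ring
  refine summable_of_ratio_test_tendsto_lt_one zero_lt_one
    (.of_forall fun k => (div_pos (pow_pos hR k) (hG k)).ne') ?_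
  simp_rw [hratio]
  exact tendsto_const_nhds.div_atTop <| tendsto_atTop_add_const_right _ _ <|
    tendsto_atTop_add_const_left _ _ tendsto_natCast_atTop_atTop

theorem wBessel_eqOn_expSeries (v c : ℝ) :
    EqOn (wBessel v c) (expSeries c v (besselCoeff v)) (Ioi 0) := by
  intro x (hx : 0 < x)
  have hsqrt : sqrt x ^ v = x ^ (v / 2) := by
    rw [sqrt_eq_rpow, ← rpow_mul hx.le]
    ring_nf
  have hhalf : x ^ (v / 2) * x ^ (v / 2) = x ^ v := by
    rw [← rpow_add hx]
    ring_nf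
  have hsq : (2 * sqrt x) ^ 2 / 4 = x := by
    rw [mul_pow, sq_sqrt hx.le]
    ring
  rw [wBessel, besselI, expSeries, mul_div_cancel_left₀ _ two_ne_zero, hsq, hsqrt, ← mul_assoc,
    ← tsum_mul_left]
  congr 1 with k
  rw [besselCoeff, rpow_add hx, rpow_natCast, ← hhalf]
  ring

theorem integral_wBessel (hv : -1 < v) (hc : 0 < c) :
    ∫ x in Ioi 0, wBessel v c x = c ^ (-v - 1) * exp (1 / c) := by
  have hterm (k : ℕ) : besselCoeff v k * ((1 / c) ^ (v + k + 1) * Gamma (v + k + 1)) =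
      c ^ (-v - 1) * ((1 / c) ^ k / k !) := by
    have hpow : (1 / c) ^ (v + k + 1) = c ^ (-v - 1) * (1 / c) ^ k := by
      rw [add_right_comm, rpow_add (by positivity), rpow_natCast, one_div, inv_rpow hc.le,
        ← rpow_neg hc.le, neg_add']
    have := Gamma_add_natCast_add_one_pos hv k
    rw [besselCoeff, Gamma_nat_eq_factorial, hpow]
    field_simp
  have hsum : Summable fun k : ℕ =>
      |besselCoeff v k| * ((1 / c) ^ (v + k + 1) * Gamma (v + k + 1)) := by
    simp_rw [abs_of_pos (besselCoeff_pos hv _), hterm]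
    exact (summable_pow_div_factorial _).mul_left _
  rw [setIntegral_congr_fun measurableSet_Ioi (wBessel_eqOn_expSeries v c),
    integral_expSeries hc hv hsum, tsum_congr hterm, tsum_mul_left,
    (hasSum_pow_div_factorial _).tsum_eq]

end BesselMoments

open BesselMoments in
theorem Qt_orthogonality_and_norm (n : ℕ) (α c : ℝ) (hα : -1 < α) (hc : 0 < c) :
    (∀ i : ℕ, i < n → ∫ x in Set.Ioi (0 : ℝ), (x : ℝ) ^ (i : ℕ) * Qt n α c x = 0) ∧
      ∫ x in Set.Ioi (0 : ℝ), x ^ (n : ℕ) * Qt n α c x =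
        (-1) ^ n * Real.Gamma ((n : ℝ) + 1) * Real.exp (1 / c) * c ^ (-α - n - 1) := by
  set v := α + n
  have hv : -1 < v := by linarith [n.cast_nonneg (α := ℝ)]
  have hspan (m : ℕ) : ExpSeriesSpan c (v - m) (iteratedDeriv m (wBessel v c)) :=
    (ExpSeriesSpan.expSeries (factorialSummable_besselCoeff hv) le_rfl |>.congr
      (wBessel_eqOn_expSeries v c).symm).iteratedDeriv hc m
  have hmoments := integral_Ioi_pow_mul_of_hasDerivAt (F := fun m => iteratedDeriv m (wBessel v c))
    (n := n)
    (fun m _ x hx => by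
      rw [iteratedDeriv_succ]
      exact ((hspan m).differentiableAt hc hx).hasDerivAt)
    (fun m hm => (hspan m).tendsto_nhdsGT_zero hc (by
      have : (m : ℝ) + 1 ≤ n := mod_cast hm
      linarith))
    (fun m hm j => ((hspan m).pow_mul j).integrableOn hc (by
      have : (m : ℝ) ≤ n := mod_cast hm
      linarith [j.cast_nonneg (α := ℝ)]))
    (fun m _ j => ((hspan m).pow_mul j).tendsto_atTop hc)
  have hQt : Qt n α c = iteratedDeriv n (wBessel v c) := rfl
  refine ⟨hmoments.1, ?_⟩
  rw [hQt, hmoments.2, iteratedDeriv_zero, integral_wBessel hv hc, Gamma_nat_eq_factorial,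
    show -v - 1 = -α - n - 1 by ring]
  ring
end

section
/- For α > -1 and c > 0, the functions Q̃_n^{(α,c)}(x) := (d^n/dx^n)[w_{α+n,c}(x)] satisfy the structure relation x·(d/dx) Q̃_n^{(α,c)}(x) = −(1/c)·Q̃_{n+2}^{(α,c)}(x) + ((c(α+n+1)+1)/c)·Q̃_{n+1}^{(α,c)}(x) − (n+1)·Q̃_n^{(α,c)}(x) for all x > 0. -/
/-!
In terms of the entire Bessel–Clifford function `C_v(x) = ∑ xⁱ / (i! Γ(v + i + 1))`, for which
`I_v(2√x) = x^{v/2} C_v(x)`, the weight is `w_v(x) = x^v e^{-cx} C_v(x)` for `x > 0`.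
Termwise, `C_v' = C_{v+1}` and `C_v = (v + 1) C_{v+1} + x C_{v+2}`; hence
`x w_v = (v + 1) w_{v+1} + w_{v+2}` and `w_{v+1}' = w_v - c w_{v+1}`.
Differentiating the first identity `n + 1` times (Leibniz) with `v = α + n` gives
`x Q̃_n' + (n + 1) Q̃_n = (α + n + 1) Q̃_{n+1} + D^{n+1} w_{α+n+2}`, and the second one
(differentiated `n + 1` times) turns the last term into `(Q̃_{n+1} - Q̃_{n+2}) / c`.
-/

open Filter Topology Real Nat

/-- Mathlib's `Gamma` vanishes at its poles, so this is the genuine `1 / (i! Γ(v + i + 1))`,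
zero when `v + i + 1` is a nonpositive integer. -/
noncomputable def besselCliffordCoeff (v : ℝ) (i : ℕ) : ℝ :=
  ((i ! : ℝ) * Gamma (v + i + 1))⁻¹

noncomputable def besselClifford (v x : ℝ) : ℝ :=
  ∑' i : ℕ, besselCliffordCoeff v i * x ^ i

lemma besselCliffordCoeff_eq_mul (v : ℝ) (i : ℕ) :
    besselCliffordCoeff v i = (v + i + 1) * besselCliffordCoeff (v + 1) i := by
  unfold besselCliffordCoeff
  rcases eq_or_ne (v + i + 1) 0 with h | h
  · simp [h]
  · rw [show v + 1 + i + 1 = v + i + 1 + 1 by ring, Gamma_add_one h, mul_left_comm (i ! : ℝ),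
      mul_inv (v + i + 1), mul_inv_cancel_left₀ h]

lemma succ_mul_besselCliffordCoeff_succ (v : ℝ) (i : ℕ) :
    ((i + 1 : ℕ) : ℝ) * besselCliffordCoeff v (i + 1) = besselCliffordCoeff (v + 1) i := by
  unfold besselCliffordCoeff
  rw [factorial_succ, show v + ((i + 1 : ℕ) : ℝ) + 1 = v + 1 + i + 1 by push_cast; ring,
    Nat.cast_mul, mul_assoc, mul_inv, mul_inv_cancel_left₀ (by positivity)]

lemma abs_besselCliffordCoeff_le (v : ℝ) :
    ∀ᶠ i : ℕ in atTop, |besselCliffordCoeff v i| ≤ (i ! : ℝ)⁻¹ := by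
  filter_upwards [(tendsto_natCast_atTop_atTop (R := ℝ)).eventually_ge_atTop (1 - v)] with i hi
  have hGamma : 1 ≤ Gamma (v + i + 1) := by
    have := Gamma_strictMonoOn_Ici.monotoneOn (a := 2) (b := v + i + 1) (by norm_num)
      (by rw [Set.mem_Ici]; linarith) (by linarith)
    rwa [Gamma_two] at this
  unfold besselCliffordCoeff
  rw [abs_of_pos (by positivity)]
  exact inv_anti₀ (by positivity) (le_mul_of_one_le_right (by positivity) hGamma)

lemma summable_norm_besselCliffordCoeff_mul_pow (v x : ℝ) :
    Summable fun i : ℕ => ‖besselCliffordCoeff v i * x ^ i‖ := by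
  refine .of_norm_bounded_eventually_nat (Real.summable_pow_div_factorial |x|) ?_
  filter_upwards [abs_besselCliffordCoeff_le v] with i hi
  rw [norm_norm, norm_mul, norm_pow, Real.norm_eq_abs, Real.norm_eq_abs, div_eq_inv_mul]
  gcongr

lemma besselCliffordCoeff_mul_deriv_pow_succ (v x : ℝ) (i : ℕ) :
    besselCliffordCoeff v (i + 1) * (((i + 1 : ℕ) : ℝ) * x ^ (i + 1 - 1))
      = besselCliffordCoeff (v + 1) i * x ^ i := by
  rw [← succ_mul_besselCliffordCoeff_succ, Nat.add_sub_cancel]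
  ring

lemma hasSum_besselCliffordCoeff_mul_deriv_pow (v x : ℝ) :
    HasSum (fun i : ℕ => besselCliffordCoeff v i * (i * x ^ (i - 1)))
      (besselClifford (v + 1) x) := by
  refine (hasSum_nat_add_iff' 1).1 ?_
  simp only [besselCliffordCoeff_mul_deriv_pow_succ, Finset.sum_range_one, CharP.cast_eq_zero, zero_mul,
    mul_zero, sub_zero]
  exact (summable_norm_besselCliffordCoeff_mul_pow (v + 1) x).of_norm.hasSum

lemma hasDerivAt_besselClifford (v x : ℝ) :
    HasDerivAt (besselClifford v) (besselClifford (v + 1) x) x := by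
  set R := |x| + 1
  have hxR : x ∈ Metric.ball (0 : ℝ) R := by simp [R]
  have hbound : Summable fun i : ℕ => ‖besselCliffordCoeff v i * (i * R ^ (i - 1))‖ := by
    refine (summable_nat_add_iff 1).1 ?_
    simp only [besselCliffordCoeff_mul_deriv_pow_succ]
    exact summable_norm_besselCliffordCoeff_mul_pow (v + 1) R
  rw [← (hasSum_besselCliffordCoeff_mul_deriv_pow v x).tsum_eq]
  refine hasDerivAt_tsum_of_isPreconnected hbound Metric.isOpen_ball
    (convex_ball 0 R).isPreconnected (fun i y _ => (hasDerivAt_pow i y).const_mul _)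
    (fun i y hy => ?_) hxR (summable_norm_besselCliffordCoeff_mul_pow v x).of_norm hxR
  have hyR : |y| ≤ |R| := by
    rw [mem_ball_zero_iff, Real.norm_eq_abs] at hy
    exact hy.le.trans (le_abs_self R)
  simp only [norm_mul, norm_pow, Real.norm_eq_abs]
  gcongr

lemma contDiff_besselClifford (n : ℕ) (v : ℝ) : ContDiff ℝ n (besselClifford v) := by
  induction n generalizing v with
  | zero =>
    exact contDiff_zero.2 <| continuous_iff_continuousAt.2 fun x =>
      (hasDerivAt_besselClifford v x).continuousAt
  | succ n ih =>
    rw [Nat.cast_succ, contDiff_succ_iff_deriv]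
    refine ⟨fun x => (hasDerivAt_besselClifford v x).differentiableAt, by simp, ?_⟩
    rw [funext fun x => (hasDerivAt_besselClifford v x).deriv]
    exact ih (v + 1)

lemma besselClifford_eq_add (v x : ℝ) :
    besselClifford v x = (v + 1) * besselClifford (v + 1) x + x * besselClifford (v + 2) x := by
  have hterm (i : ℕ) : besselCliffordCoeff v i * x ^ i
      = (v + 1) * (besselCliffordCoeff (v + 1) i * x ^ i)
      + x * (besselCliffordCoeff (v + 1) i * (i * x ^ (i - 1))) := by
    rw [besselCliffordCoeff_eq_mul]
    rcases i with _ | i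
    · simp
    · rw [Nat.add_sub_cancel, pow_succ]; push_cast; ring
  have hderiv := hasSum_besselCliffordCoeff_mul_deriv_pow (v + 1) x
  rw [show v + 1 + 1 = v + 2 by ring] at hderiv
  have hvalue := (summable_norm_besselCliffordCoeff_mul_pow (v + 1) x).of_norm.hasSum
  rw [besselClifford, tsum_congr hterm]
  exact ((hvalue.mul_left (v + 1)).add (hderiv.mul_left x)).tsum_eq

lemma iteratedDeriv_succ_id_mul {𝕜 : Type*} [NontriviallyNormedField 𝕜] {f : 𝕜 → 𝕜}
    {x : 𝕜} (n : ℕ) (hf : ContDiffAt 𝕜 (n + 1 : ℕ) f x) :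
    iteratedDeriv (n + 1) (fun y => y * f y) x
      = x * iteratedDeriv (n + 1) f x + (n + 1) * iteratedDeriv n f x := by
  rw [iteratedDeriv_fun_mul (f := fun y => y) contDiffAt_id hf, Finset.sum_range_succ',
    Finset.sum_range_succ']
  simp [iteratedDeriv_fun_id, Finset.sum_eq_zero, add_comm, mul_comm]

section wBessel

variable (v c : ℝ) {x : ℝ}

lemma wBessel_eq_rpow_mul (hx : 0 < x) :
    wBessel v c x = x ^ v * exp (-c * x) * besselClifford v x := by
  have hsqrt : (√x) ^ v = x ^ (v / 2) := by
    rw [sqrt_eq_rpow, ← rpow_mul hx.le]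
    ring_nf
  have hseries : ∑' i : ℕ, ((2 * √x) ^ 2 / 4) ^ i / (Gamma (i + 1) * Gamma (v + i + 1))
      = besselClifford v x := by
    refine tsum_congr fun i => ?_
    rw [mul_pow, sq_sqrt hx.le, Gamma_nat_eq_factorial, besselCliffordCoeff]
    ring
  have hpow : x ^ v = x ^ (v / 2) * x ^ (v / 2) := by
    rw [← rpow_add hx]
    ring_nf
  rw [wBessel, besselI, hseries, show 2 * √x / 2 = √x by ring, hsqrt, hpow]
  ring

lemma wBessel_eventuallyEq (hx : 0 < x) :
    (fun y => wBessel v c y) =ᶠ[𝓝 x] fun y => y ^ v * exp (-c * y) * besselClifford v y := by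
  filter_upwards [lt_mem_nhds hx] with y hy
  exact wBessel_eq_rpow_mul v c hy

lemma mul_wBessel (hx : 0 < x) :
    x * wBessel v c x = (v + 1) * wBessel (v + 1) c x + wBessel (v + 2) c x := by
  rw [wBessel_eq_rpow_mul v c hx, wBessel_eq_rpow_mul (v + 1) c hx,
    wBessel_eq_rpow_mul (v + 2) c hx, besselClifford_eq_add, rpow_add hx, rpow_add hx,
    rpow_one, rpow_two]
  ring

lemma hasDerivAt_wBessel (hx : 0 < x) :
    HasDerivAt (fun y => wBessel (v + 1) c y) (wBessel v c x - c * wBessel (v + 1) c x) x := by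
  have hprod := ((hasDerivAt_rpow_const (p := v + 1) (Or.inl hx.ne')).mul
    ((hasDerivAt_id x).const_mul (-c)).exp).mul (hasDerivAt_besselClifford (v + 1) x)
  refine (hprod.congr_of_eventuallyEq (wBessel_eventuallyEq (v + 1) c hx)).congr_deriv ?_
  simp only [Pi.mul_apply, id_eq]
  rw [wBessel_eq_rpow_mul v c hx, wBessel_eq_rpow_mul (v + 1) c hx, besselClifford_eq_add v,
    add_sub_cancel_right, rpow_add hx, rpow_one, show v + 1 + 1 = v + 2 by ring]
  ring

lemma contDiffAt_wBessel (n : ℕ) (hx : 0 < x) : ContDiffAt ℝ n (fun y => wBessel v c y) x :=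
  (((contDiffAt_rpow_const_of_ne hx.ne').mul (contDiffAt_const.mul contDiffAt_id).exp).mul
    (contDiff_besselClifford n v).contDiffAt).congr_of_eventuallyEq (wBessel_eventuallyEq v c hx)

lemma iteratedDeriv_succ_wBessel (n : ℕ) (hx : 0 < x) :
    iteratedDeriv (n + 1) (fun y => wBessel (v + 1) c y) x
      = iteratedDeriv n (fun y => wBessel v c y) x
        - c * iteratedDeriv n (fun y => wBessel (v + 1) c y) x := by
  have hderiv : deriv (fun y => wBessel (v + 1) c y) =ᶠ[𝓝 x]
      fun y => wBessel v c y - c * wBessel (v + 1) c y := by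
    filter_upwards [lt_mem_nhds hx] with y hy
    exact (hasDerivAt_wBessel v c hy).deriv
  rw [iteratedDeriv_succ', hderiv.iteratedDeriv_eq, iteratedDeriv_fun_sub
    (contDiffAt_wBessel v c n hx) (contDiffAt_const.mul (contDiffAt_wBessel (v + 1) c n hx)),
    iteratedDeriv_const_mul_field]

lemma iteratedDeriv_id_mul_wBessel (n : ℕ) (hx : 0 < x) :
    x * iteratedDeriv (n + 1) (fun y => wBessel v c y) x
      + (n + 1) * iteratedDeriv n (fun y => wBessel v c y) x
      = (v + 1) * iteratedDeriv (n + 1) (fun y => wBessel (v + 1) c y) x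
        + iteratedDeriv (n + 1) (fun y => wBessel (v + 2) c y) x := by
  have hmul : (fun y => y * wBessel v c y) =ᶠ[𝓝 x]
      fun y => (v + 1) * wBessel (v + 1) c y + wBessel (v + 2) c y := by
    filter_upwards [lt_mem_nhds hx] with y hy
    exact mul_wBessel v c hy
  rw [← iteratedDeriv_succ_id_mul n (contDiffAt_wBessel v c (n + 1) hx),
    hmul.iteratedDeriv_eq, iteratedDeriv_fun_add
      (contDiffAt_const.mul (contDiffAt_wBessel (v + 1) c (n + 1) hx))
      (contDiffAt_wBessel (v + 2) c _ hx),
    iteratedDeriv_const_mul_field]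

end wBessel

theorem Qt_structure_relation_general (n : ℕ) (α c x : ℝ) (hc : 0 < c) (hx : 0 < x) :
    x * deriv (fun y => Qt n α c y) x =
      -(1 / c) * Qt (n + 2) α c x + ((c * (α + n + 1) + 1) / c) * Qt (n + 1) α c x -
        ((n : ℝ) + 1) * Qt n α c x := by
  have hQ1 : Qt (n + 1) α c x = iteratedDeriv (n + 1) (fun y => wBessel (α + n + 1) c y) x := by
    rw [Qt, Nat.cast_succ, ← add_assoc]
  have hQ2 : Qt (n + 2) α c x
      = iteratedDeriv (n + 2) (fun y => wBessel (α + n + 1 + 1) c y) x := by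
    rw [Qt, Nat.cast_add, Nat.cast_two, add_assoc (α + n), one_add_one_eq_two, ← add_assoc]
  have hderiv : deriv (fun y => Qt n α c y) x
      = iteratedDeriv (n + 1) (fun y => wBessel (α + n) c y) x := by
    rw [iteratedDeriv_succ]
    rfl
  have hleibniz := iteratedDeriv_id_mul_wBessel (α + n) c n hx
  have hdescent := iteratedDeriv_succ_wBessel (α + n + 1) c (n + 1) hx
  rw [show α + n + 2 = α + n + 1 + 1 by ring] at hleibniz
  rw [hderiv, hQ1, hQ2, hdescent, Qt]
  field_simp
  linear_combination c * hleibniz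

theorem Qt_structure_relation (n : ℕ) (α c x : ℝ) (hα : -1 < α) (hc : 0 < c) (hx : 0 < x) :
    x * deriv (fun y => Qt n α c y) x =
      -(1 / c) * Qt (n + 2) α c x + ((c * (α + n + 1) + 1) / c) * Qt (n + 1) α c x -
        ((n : ℝ) + 1) * Qt n α c x :=
  Qt_structure_relation_general n α c x hc hx
end
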